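/- arXiv:2306.12981 — 6 statements merged into one kernel-verified Lean document; each statement's English description precedes it below -/
import Mathlib

section
/- Let M = (S, A, P, R, γ) be a finite discounted MDP with rewards in [0,1], g : A → G a grouping function, and π^i a lower-level policy. Then ‖V_M^* − V_M^{π_G^*}‖_∞ ≤ 2(β_R^*(g)/(1−γ) + γ·β_P^*(g)/(1−γ)²), where π_G^* is an optimal grouped policy. -/
open scoped BigOperators Classical

namespace MDPGroup

variable {S A G : Type*}

/-- `P` is a transition kernel: `P s a ·` is a probability distribution on states. -/
structure IsKernel [Fintype S] (P : S → A → S → ℝ) : Prop where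
  nonneg : ∀ s a s', 0 ≤ P s a s'
  sum_one : ∀ s a, ∑ s', P s a s' = 1

/-- `π` is a stationary randomized policy. -/
structure IsPolicy [Fintype A] (π : S → A → ℝ) : Prop where
  nonneg : ∀ s a, 0 ≤ π s a
  sum_one : ∀ s, ∑ a, π s a = 1

/-- `Q` satisfies the Bellman equation for policy `π`. -/
def IsBellman [Fintype S] [Fintype A] (P : S → A → S → ℝ) (R : S → A → ℝ) (γ : ℝ)
    (π : S → A → ℝ) (Q : S → A → ℝ) : Prop :=
  ∀ s a, Q s a = R s a + γ * ∑ s', P s a s' * ∑ a', π s' a' * Q s' a'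

/-- The action-value function of policy `π` (the unique solution of the Bellman equation,
when it exists). -/
noncomputable def Qpi [Fintype S] [Fintype A] (P : S → A → S → ℝ) (R : S → A → ℝ)
    (γ : ℝ) (π : S → A → ℝ) : S → A → ℝ :=
  if h : ∃ Q : S → A → ℝ, IsBellman P R γ π Q then h.choose else 0

/-- The state-value function of policy `π`. -/
noncomputable def Vpi [Fintype S] [Fintype A] (P : S → A → S → ℝ) (R : S → A → ℝ)
    (γ : ℝ) (π : S → A → ℝ) : S → ℝ :=
  fun s => ∑ a, π s a * Qpi P R γ π s a

/-- The optimal state-value function. -/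
noncomputable def Vstar [Fintype S] [Fintype A] (P : S → A → S → ℝ) (R : S → A → ℝ)
    (γ : ℝ) : S → ℝ :=
  fun s => ⨆ π : {π : S → A → ℝ // IsPolicy π}, Vpi P R γ π.1 s

/-- The optimal action-value function. -/
noncomputable def Qstar [Fintype S] [Fintype A] (P : S → A → S → ℝ) (R : S → A → ℝ)
    (γ : ℝ) : S → A → ℝ :=
  fun s a => ⨆ π : {π : S → A → ℝ // IsPolicy π}, Qpi P R γ π.1 s a

/-- Supremum norm of a function on a (finite) index type. -/
noncomputable def supNorm {ι : Type*} (f : ι → ℝ) : ℝ := ⨆ i, |f i|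

/-- A lower-level policy, selecting an action within each group. -/
structure IsLower [Fintype A] (g : A → G) (πi : G → A → ℝ) : Prop where
  nonneg : ∀ h a, 0 ≤ πi h a
  sum_one : ∀ h, ∑ a, πi h a = 1
  support : ∀ h a, g a ≠ h → πi h a = 0

/-- The composed policy `π^o ∘ π^i`. -/
def compose (g : A → G) (πi : G → A → ℝ) (πo : S → G → ℝ) : S → A → ℝ :=
  fun s a => πo s (g a) * πi (g a) a

/-- Grouped transition kernel. -/
noncomputable def PG [Fintype A] (P : S → A → S → ℝ) (πi : G → A → ℝ) : S → G → S → ℝ :=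
  fun s h s' => ∑ a, πi h a * P s a s'

/-- Grouped reward. -/
noncomputable def RG [Fintype A] (R : S → A → ℝ) (πi : G → A → ℝ) : S → G → ℝ :=
  fun s h => ∑ a, πi h a * R s a

/-- The optimal transition deviation factor `β_P^*(g)`. -/
noncomputable def betaPstar [Fintype S] (P : S → A → S → ℝ) (g : A → G) : ℝ :=
  ⨆ p : S × G, (1 - ∑ s', ⨅ a : {a : A // g a = p.2}, P p.1 a.1 s')

/-- The optimal reward deviation factor `β_R^*(g)`. -/
noncomputable def betaRstar (R : S → A → ℝ) (g : A → G) : ℝ :=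
  ⨆ q : {q : S × A × A // g q.2.1 = g q.2.2}, (R q.1.1 q.1.2.1 - R q.1.1 q.1.2.2)





/-- Weighted average bounds -/
lemma avg_le {α : Type*} [Fintype α] (w f : α → ℝ) (hw : ∀ a, 0 ≤ w a)
    (hw1 : ∑ a, w a = 1) (c : ℝ) (hf : ∀ a, f a ≤ c) : ∑ a, w a * f a ≤ c := by
  calc ∑ a, w a * f a ≤ ∑ a, w a * c :=
        Finset.sum_le_sum (fun a _ => mul_le_mul_of_nonneg_left (hf a) (hw a))
    _ = c := by rw [← Finset.sum_mul, hw1, one_mul]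

lemma le_avg {α : Type*} [Fintype α] (w f : α → ℝ) (hw : ∀ a, 0 ≤ w a)
    (hw1 : ∑ a, w a = 1) (c : ℝ) (hf : ∀ a, c ≤ f a) : c ≤ ∑ a, w a * f a := by
  calc c = ∑ a, w a * c := by rw [← Finset.sum_mul, hw1, one_mul]
    _ ≤ ∑ a, w a * f a :=
        Finset.sum_le_sum (fun a _ => mul_le_mul_of_nonneg_left (hf a) (hw a))

lemma avg_abs_le {α : Type*} [Fintype α] (w f : α → ℝ) (hw : ∀ a, 0 ≤ w a)
    (hw1 : ∑ a, w a = 1) (δ : ℝ) (hf : ∀ a, |f a| ≤ δ) : |∑ a, w a * f a| ≤ δ := by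
  calc |∑ a, w a * f a| ≤ ∑ a, |w a * f a| := Finset.abs_sum_le_sum_abs _ _
    _ = ∑ a, w a * |f a| := by
        refine Finset.sum_congr rfl (fun a _ => ?_)
        rw [abs_mul, abs_of_nonneg (hw a)]
    _ ≤ δ := avg_le w _ hw hw1 δ hf

/-- generic fixed point existence -/
lemma exists_fixed {σ : Type*} [Fintype σ] [Nonempty σ] (γ : ℝ) (hγ0 : 0 ≤ γ) (hγ1 : γ < 1)
    (T : (σ → ℝ) → (σ → ℝ))
    (hT : ∀ v w : σ → ℝ, ∀ δ : ℝ, 0 ≤ δ → (∀ s, |v s - w s| ≤ δ) → ∀ s, |T v s - T w s| ≤ γ * δ) :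
    ∃ v : σ → ℝ, T v = v := by
  have hK : ContractingWith (NNReal.mk γ hγ0) T := by
    constructor
    · exact_mod_cast hγ1
    · rw [lipschitzWith_iff_dist_le_mul]
      intro x y
      simp only [NNReal.coe_mk]
      have h0 : (0:ℝ) ≤ γ * dist x y := mul_nonneg hγ0 dist_nonneg
      rw [dist_pi_le_iff h0]
      intro s
      rw [Real.dist_eq]
      exact hT x y (dist x y) dist_nonneg
        (fun s' => by rw [← Real.dist_eq]; exact dist_le_pi_dist x y s') s
  exact ⟨_, hK.fixedPoint_isFixedPt⟩


section Generic
set_option linter.unusedSectionVars false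
variable {σ α : Type*} [Fintype σ] [Fintype α] [Nonempty σ] [Nonempty α]

/-- one-step arm value -/
noncomputable def arm (p : σ → α → σ → ℝ) (r : σ → α → ℝ) (γ : ℝ) (v : σ → ℝ) (s : σ) (a : α) : ℝ :=
  r s a + γ * ∑ s', p s a s' * v s'

/-- Bellman optimality operator -/
noncomputable def Topt (p : σ → α → σ → ℝ) (r : σ → α → ℝ) (γ : ℝ) (v : σ → ℝ) (s : σ) : ℝ :=
  Finset.univ.sup' Finset.univ_nonempty (arm p r γ v s)

variable {p : σ → α → σ → ℝ} {r : σ → α → ℝ} {γ : ℝ}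

lemma sum_p_sub (s : σ) (a : α) (v w : σ → ℝ) :
    ∑ s', p s a s' * (v s' - w s') = (∑ s', p s a s' * v s') - (∑ s', p s a s' * w s') := by
  simp [mul_sub, Finset.sum_sub_distrib]

lemma arm_sub_abs (hp : IsKernel p) (hγ0 : 0 ≤ γ) {v w : σ → ℝ} {δ : ℝ}
    (h : ∀ s', |v s' - w s'| ≤ δ) (s : σ) (a : α) :
    |arm p r γ v s a - arm p r γ w s a| ≤ γ * δ := by
  have he : arm p r γ v s a - arm p r γ w s a = γ * ∑ s', p s a s' * (v s' - w s') := by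
    rw [sum_p_sub]; simp only [arm]; ring
  rw [he, abs_mul, abs_of_nonneg hγ0]
  exact mul_le_mul_of_nonneg_left
    (avg_abs_le _ _ (hp.nonneg s a) (hp.sum_one s a) δ h) hγ0

lemma Topt_sub_le (hp : IsKernel p) (hγ0 : 0 ≤ γ) {v w : σ → ℝ} {δ : ℝ} (hδ : 0 ≤ δ)
    (h : ∀ s', |v s' - w s'| ≤ δ) (s : σ) :
    Topt p r γ v s - Topt p r γ w s ≤ γ * δ := by
  rw [sub_le_iff_le_add]
  apply Finset.sup'_le
  intro a _
  have h1 : arm p r γ v s a ≤ arm p r γ w s a + γ * δ := by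
    have := (abs_le.1 (arm_sub_abs (r := r) hp hγ0 h s a)).2
    linarith
  exact le_trans h1 (by
    have := Finset.le_sup' (arm p r γ w s) (Finset.mem_univ a)
    simp only [Topt]; linarith)

lemma Topt_sub_abs (hp : IsKernel p) (hγ0 : 0 ≤ γ) {v w : σ → ℝ} {δ : ℝ} (hδ : 0 ≤ δ)
    (h : ∀ s', |v s' - w s'| ≤ δ) (s : σ) :
    |Topt p r γ v s - Topt p r γ w s| ≤ γ * δ := by
  rw [abs_sub_le_iff]
  refine ⟨Topt_sub_le hp hγ0 hδ h s, Topt_sub_le hp hγ0 hδ (fun s' => ?_) s⟩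
  rw [abs_sub_comm]; exact h s'

lemma exists_Topt_fixed (hp : IsKernel p) (hγ0 : 0 ≤ γ) (hγ1 : γ < 1) :
    ∃ v : σ → ℝ, Topt p r γ v = v :=
  exists_fixed γ hγ0 hγ1 (Topt p r γ) (fun v w δ hδ h => Topt_sub_abs hp hγ0 hδ h)


/-- evaluation operator on state values -/
noncomputable def Lop (p : σ → α → σ → ℝ) (r : σ → α → ℝ) (γ : ℝ) (π : σ → α → ℝ)
    (v : σ → ℝ) (s : σ) : ℝ := ∑ a, π s a * arm p r γ v s a

variable {π : σ → α → ℝ}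

lemma Lop_sub_abs (hp : IsKernel p) (hπ : IsPolicy π) (hγ0 : 0 ≤ γ) {v w : σ → ℝ} {δ : ℝ}
    (h : ∀ s', |v s' - w s'| ≤ δ) (s : σ) :
    |Lop p r γ π v s - Lop p r γ π w s| ≤ γ * δ := by
  have he : Lop p r γ π v s - Lop p r γ π w s
      = ∑ a, π s a * (arm p r γ v s a - arm p r γ w s a) := by
    simp [mul_sub, Finset.sum_sub_distrib, Lop]
  rw [he]
  exact avg_abs_le _ _ (hπ.nonneg s) (hπ.sum_one s) _
    (fun a => arm_sub_abs (r := r) hp hγ0 h s a)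

lemma exists_isBellman (hp : IsKernel p) (hπ : IsPolicy π) (hγ0 : 0 ≤ γ) (hγ1 : γ < 1) :
    ∃ Q, IsBellman p r γ π Q := by
  obtain ⟨v, hv⟩ := exists_fixed γ hγ0 hγ1 (Lop p r γ π)
    (fun v w δ hδ h => Lop_sub_abs hp hπ hγ0 h)
  refine ⟨arm p r γ v, fun s a => ?_⟩
  have hV : ∀ s', ∑ a', π s' a' * arm p r γ v s' a' = v s' := fun s' => congrFun hv s'
  have h1 : (∑ s', p s a s' * ∑ a', π s' a' * arm p r γ v s' a') = ∑ s', p s a s' * v s' :=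
    Finset.sum_congr rfl (fun s' _ => by rw [hV s'])
  show arm p r γ v s a = _
  rw [h1]; rfl

lemma isBellman_unique (hp : IsKernel p) (hπ : IsPolicy π) (hγ0 : 0 ≤ γ) (hγ1 : γ < 1)
    {Q Q' : σ → α → ℝ} (h : IsBellman p r γ π Q) (h' : IsBellman p r γ π Q') : Q = Q' := by
  have hne : (Finset.univ : Finset (σ × α)).Nonempty := Finset.univ_nonempty
  set D := Finset.univ.sup' hne (fun q : σ × α => |Q q.1 q.2 - Q' q.1 q.2|) with hDdef
  have hmem : ∀ s a, |Q s a - Q' s a| ≤ D := fun s a =>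
    Finset.le_sup' (fun q : σ × α => |Q q.1 q.2 - Q' q.1 q.2|) (Finset.mem_univ (s, a))
  have hle : ∀ s a, |Q s a - Q' s a| ≤ γ * D := by
    intro s a
    have e1 : ∑ s', p s a s' * (∑ a', π s' a' * (Q s' a' - Q' s' a'))
        = (∑ s', p s a s' * ∑ a', π s' a' * Q s' a')
          - (∑ s', p s a s' * ∑ a', π s' a' * Q' s' a') := by
      rw [← sum_p_sub]
      refine Finset.sum_congr rfl fun s' _ => ?_
      congr 1
      simp [mul_sub, Finset.sum_sub_distrib]
    have he : Q s a - Q' s a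
        = γ * ∑ s', p s a s' * (∑ a', π s' a' * (Q s' a' - Q' s' a')) := by
      rw [h s a, h' s a, e1]; ring
    rw [he, abs_mul, abs_of_nonneg hγ0]
    refine mul_le_mul_of_nonneg_left ?_ hγ0
    refine avg_abs_le _ _ (hp.nonneg s a) (hp.sum_one s a) D (fun s' => ?_)
    exact avg_abs_le _ _ (hπ.nonneg s') (hπ.sum_one s') D (fun a' => hmem s' a')
  have hD0 : 0 ≤ D :=
    le_trans (abs_nonneg _) (hmem (Classical.arbitrary σ) (Classical.arbitrary α))
  obtain ⟨q, -, hq⟩ := Finset.exists_mem_eq_sup' hne (fun q : σ × α => |Q q.1 q.2 - Q' q.1 q.2|)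
  have hDle : D ≤ γ * D := by
    calc D = |Q q.1 q.2 - Q' q.1 q.2| := hDdef.trans hq
      _ ≤ γ * D := hle q.1 q.2
  have hD : D ≤ 0 := by nlinarith
  funext s a
  have h0 : |Q s a - Q' s a| ≤ 0 := le_trans (hmem s a) hD
  have := abs_nonpos_iff.mp h0
  linarith [sub_eq_zero.mp (abs_nonpos_iff.mp h0)]

lemma qpi_isBellman (hp : IsKernel p) (hπ : IsPolicy π) (hγ0 : 0 ≤ γ) (hγ1 : γ < 1) :
    IsBellman p r γ π (Qpi p r γ π) := by
  have hex := exists_isBellman (r := r) hp hπ hγ0 hγ1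
  rw [Qpi, dif_pos hex]
  exact hex.choose_spec

lemma qpi_eq (hp : IsKernel p) (hπ : IsPolicy π) (hγ0 : 0 ≤ γ) (hγ1 : γ < 1)
    {Q : σ → α → ℝ} (h : IsBellman p r γ π Q) : Qpi p r γ π = Q :=
  isBellman_unique hp hπ hγ0 hγ1 (qpi_isBellman hp hπ hγ0 hγ1) h

lemma vfix_bounds (hp : IsKernel p) (hr : ∀ s a, 0 ≤ r s a ∧ r s a ≤ 1)
    (hγ0 : 0 ≤ γ) (hγ1 : γ < 1) {v : σ → ℝ} (hv : Topt p r γ v = v) :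
    ∀ s, 0 ≤ v s ∧ v s ≤ 1 / (1 - γ) := by
  have hne : (Finset.univ : Finset σ).Nonempty := Finset.univ_nonempty
  set m := Finset.univ.inf' hne v with hmdef
  set M := Finset.univ.sup' hne v with hMdef
  have hmle : ∀ s', m ≤ v s' := fun s' => Finset.inf'_le v (Finset.mem_univ s')
  have hMge : ∀ s', v s' ≤ M := fun s' => Finset.le_sup' v (Finset.mem_univ s')
  have hlow : ∀ s, γ * m ≤ v s := by
    intro s
    have hvs := (congrFun hv s).symm
    obtain ⟨a, -, ha⟩ := Finset.exists_mem_eq_sup' Finset.univ_nonempty (arm p r γ v s)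
    have harm : γ * m ≤ arm p r γ v s a := by
      have h1 : m ≤ ∑ s', p s a s' * v s' :=
        le_avg _ _ (hp.nonneg s a) (hp.sum_one s a) m hmle
      have := mul_le_mul_of_nonneg_left h1 hγ0
      have hr0 := (hr s a).1
      simp only [arm]; linarith
    rw [hvs]; dsimp only [Topt]; rw [ha]; exact harm
  have hhigh : ∀ s, v s ≤ 1 + γ * M := by
    intro s
    have hvs := (congrFun hv s).symm
    rw [hvs]
    apply Finset.sup'_le
    intro a _
    have h1 : ∑ s', p s a s' * v s' ≤ M :=
      avg_le _ _ (hp.nonneg s a) (hp.sum_one s a) M hMge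
    have := mul_le_mul_of_nonneg_left h1 hγ0
    have hr1 := (hr s a).2
    simp only [arm]; linarith
  have hm0 : 0 ≤ m := by
    obtain ⟨s0, -, hs0⟩ := Finset.exists_mem_eq_inf' hne v
    have := hlow s0
    rw [← hs0] at this
    nlinarith
  have hM1 : M ≤ 1 / (1 - γ) := by
    obtain ⟨s0, -, hs0⟩ := Finset.exists_mem_eq_sup' hne v
    have := hhigh s0
    rw [← hs0] at this
    rw [le_div_iff₀ (by linarith)]
    nlinarith
  exact fun s => ⟨le_trans hm0 (hmle s), le_trans (hMge s) hM1⟩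

lemma vpi_le_vfix (hp : IsKernel p) (hγ0 : 0 ≤ γ) (hγ1 : γ < 1)
    {v : σ → ℝ} (hv : Topt p r γ v = v) (hπ : IsPolicy π) :
    ∀ s, Vpi p r γ π s ≤ v s := by
  have hne : (Finset.univ : Finset σ).Nonempty := Finset.univ_nonempty
  set d := Finset.univ.sup' hne (fun s => Vpi p r γ π s - v s) with hddef
  have hB := qpi_isBellman (r := r) hp hπ hγ0 hγ1
  have key : ∀ s, Vpi p r γ π s - v s ≤ γ * d := by
    intro s
    have hVd : ∀ s', Vpi p r γ π s' ≤ v s' + d := fun s' => by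
      have := Finset.le_sup' (fun s => Vpi p r γ π s - v s) (Finset.mem_univ s')
      linarith
    have harm2 : ∀ a, Qpi p r γ π s a ≤ v s + γ * d := by
      intro a
      rw [hB s a]
      have h1 : ∑ s', p s a s' * ∑ a', π s' a' * Qpi p r γ π s' a'
          ≤ (∑ s', p s a s' * v s') + d := by
        calc ∑ s', p s a s' * ∑ a', π s' a' * Qpi p r γ π s' a'
            ≤ ∑ s', p s a s' * (v s' + d) :=
              Finset.sum_le_sum fun s' _ =>
                mul_le_mul_of_nonneg_left (hVd s') (hp.nonneg s a s')
          _ = (∑ s', p s a s' * v s') + d := by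
              simp [mul_add, Finset.sum_add_distrib, ← Finset.sum_mul, hp.sum_one s a]
      have h2 : arm p r γ v s a ≤ v s := by
        have hle2 := Finset.le_sup' (arm p r γ v s) (Finset.mem_univ a)
        have hv' := congrFun hv s
        simp only [Topt] at hv'
        linarith
      simp only [arm] at h2
      have h3 := mul_le_mul_of_nonneg_left h1 hγ0
      rw [mul_add] at h3
      linarith
    have hVs : Vpi p r γ π s ≤ v s + γ * d :=
      avg_le _ _ (hπ.nonneg s) (hπ.sum_one s) _ harm2
    linarith
  obtain ⟨s0, -, hs0⟩ := Finset.exists_mem_eq_sup' hne (fun s => Vpi p r γ π s - v s)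
  have hd : d ≤ γ * d := by
    calc d = Vpi p r γ π s0 - v s0 := hddef.trans hs0
      _ ≤ γ * d := key s0
  have hd0 : d ≤ 0 := by nlinarith
  intro s
  have := Finset.le_sup' (fun s => Vpi p r γ π s - v s) (Finset.mem_univ s)
  have h2 : Vpi p r γ π s - v s ≤ d := this
  linarith


lemma exists_greedy (hp : IsKernel p) (hγ0 : 0 ≤ γ) (hγ1 : γ < 1)
    {v : σ → ℝ} (hv : Topt p r γ v = v) :
    ∃ pihat : σ → α → ℝ, IsPolicy pihat ∧ ∀ s, Vpi p r γ pihat s = v s := by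
  have hsel : ∀ s : σ, ∃ a, Topt p r γ v s = arm p r γ v s a := by
    intro s
    obtain ⟨a, -, ha⟩ := Finset.exists_mem_eq_sup' Finset.univ_nonempty (arm p r γ v s)
    exact ⟨a, ha⟩
  choose astar hastar using hsel
  set pihat : σ → α → ℝ := fun s a => if a = astar s then 1 else 0 with hpihatdef
  have hpol : IsPolicy pihat :=
    ⟨fun s a => by dsimp only [pihat]; split <;> norm_num, fun s => by simp [pihat]⟩
  have hvv : ∀ s, arm p r γ v s (astar s) = v s := fun s => by
    rw [← hastar s]; exact congrFun hv s
  have hsum : ∀ (s' : σ) (f : α → ℝ), ∑ a', pihat s' a' * f a' = f (astar s') := by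
    intro s' f
    simp [pihat, ite_mul]
  have hbell : IsBellman p r γ pihat (arm p r γ v) := by
    intro s a
    have h1 : (∑ s', p s a s' * ∑ a', pihat s' a' * arm p r γ v s' a')
        = ∑ s', p s a s' * v s' :=
      Finset.sum_congr rfl (fun s' _ => by rw [hsum s' (arm p r γ v s'), hvv s'])
    show arm p r γ v s a = _
    rw [h1]; rfl
  have hq : Qpi p r γ pihat = arm p r γ v := qpi_eq hp hpol hγ0 hγ1 hbell
  refine ⟨pihat, hpol, fun s => ?_⟩
  show ∑ a, pihat s a * Qpi p r γ pihat s a = v s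
  rw [hq, hsum s (arm p r γ v s), hvv s]

lemma vstar_eq_vfix (hp : IsKernel p) (hγ0 : 0 ≤ γ) (hγ1 : γ < 1)
    {v : σ → ℝ} (hv : Topt p r γ v = v) : Vstar p r γ = v := by
  obtain ⟨pihat, hpol, hval⟩ := exists_greedy hp hγ0 hγ1 hv
  haveI : Nonempty {π : σ → α → ℝ // IsPolicy π} := ⟨⟨pihat, hpol⟩⟩
  funext s
  apply le_antisymm
  · exact ciSup_le fun q => vpi_le_vfix hp hγ0 hγ1 hv q.2 s
  · have hbdd : BddAbove (Set.range fun q : {π : σ → α → ℝ // IsPolicy π} => Vpi p r γ q.1 s) := by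
      refine ⟨v s, ?_⟩
      rintro x ⟨q, rfl⟩
      exact vpi_le_vfix hp hγ0 hγ1 hv q.2 s
    exact le_ciSup_of_le hbdd ⟨pihat, hpol⟩ (hval s).ge

end Generic

section Grouped
set_option linter.unusedSectionVars false
variable {S A G : Type*} [Fintype S] [Fintype A] [Fintype G] [Nonempty S] [Nonempty A]
variable {P : S → A → S → ℝ} {R : S → A → ℝ} {γ : ℝ} {g : A → G} {πi : G → A → ℝ}

lemma swap_sum (hπi : IsLower g πi) (πo : S → G → ℝ) (s : S) (X : A → ℝ) :
    ∑ a, compose g πi πo s a * X a = ∑ h, πo s h * ∑ a, πi h a * X a := by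
  have hsingle : ∀ a : A, ∑ h, πo s h * (πi h a * X a) = πo s (g a) * (πi (g a) a * X a) := by
    intro a
    refine Finset.sum_eq_single (g a) (fun h _ hne => ?_)
      (fun hna => absurd (Finset.mem_univ _) hna)
    rw [hπi.support h a (Ne.symm hne)]
    ring
  calc ∑ a, compose g πi πo s a * X a = ∑ a, πo s (g a) * (πi (g a) a * X a) := by
        refine Finset.sum_congr rfl fun a _ => ?_
        simp only [compose]; ring
    _ = ∑ a, ∑ h, πo s h * (πi h a * X a) :=
        Finset.sum_congr rfl fun a _ => (hsingle a).symm
    _ = ∑ h, ∑ a, πo s h * (πi h a * X a) := Finset.sum_comm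
    _ = ∑ h, πo s h * ∑ a, πi h a * X a := by simp [Finset.mul_sum]

lemma compose_isPolicy (hπi : IsLower g πi) {πo : S → G → ℝ} (hπo : IsPolicy πo) :
    IsPolicy (compose g πi πo) := by
  constructor
  · intro s a
    exact mul_nonneg (hπo.nonneg s _) (hπi.nonneg _ _)
  · intro s
    have h := swap_sum hπi πo s (fun _ => 1)
    simpa [hπi.sum_one, hπo.sum_one s] using h

lemma PG_isKernel (hP : IsKernel P) (hπi : IsLower g πi) : IsKernel (PG P πi) := by
  constructor
  · intro s h s'
    exact Finset.sum_nonneg fun a _ => mul_nonneg (hπi.nonneg h a) (hP.nonneg s a s')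
  · intro s h
    show ∑ s', ∑ a, πi h a * P s a s' = 1
    rw [Finset.sum_comm]
    simp [← Finset.mul_sum, hP.sum_one, hπi.sum_one h]

lemma arm_G (s : S) (h : G) (v : S → ℝ) :
    arm (PG P πi) (RG R πi) γ v s h = ∑ a, πi h a * arm P R γ v s a := by
  have e : ∑ s', (∑ a, πi h a * P s a s') * v s' = ∑ a, πi h a * ∑ s', P s a s' * v s' := by
    simp only [Finset.sum_mul]
    rw [Finset.sum_comm]
    simp only [Finset.mul_sum, mul_assoc]
  show RG R πi s h + γ * ∑ s', (∑ a, πi h a * P s a s') * v s' = _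
  rw [e, RG, Finset.mul_sum, ← Finset.sum_add_distrib]
  refine Finset.sum_congr rfl fun a _ => ?_
  simp only [arm]; ring

lemma vpi_compose (hP : IsKernel P) (hπi : IsLower g πi) (hγ0 : 0 ≤ γ) (hγ1 : γ < 1)
    {πo : S → G → ℝ} (hπo : IsPolicy πo) (s : S) :
    Vpi (PG P πi) (RG R πi) γ πo s = Vpi P R γ (compose g πi πo) s := by
  haveI : Nonempty G := ⟨g (Classical.arbitrary A)⟩
  have hc := compose_isPolicy hπi hπo
  have hQ := qpi_isBellman (p := P) (r := R) hP hc hγ0 hγ1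
  set Q := Qpi P R γ (compose g πi πo) with hQdef
  set QG : S → G → ℝ := fun s h => ∑ a, πi h a * Q s a with hQGdef
  have hVc : ∀ s', (∑ a', compose g πi πo s' a' * Q s' a') = ∑ h', πo s' h' * QG s' h' :=
    fun s' => swap_sum hπi πo s' (Q s')
  have hbell : IsBellman (PG P πi) (RG R πi) γ πo QG := by
    intro s h
    have step1 : QG s h = ∑ a, πi h a *
        (R s a + γ * ∑ s', P s a s' * ∑ a', compose g πi πo s' a' * Q s' a') :=
      Finset.sum_congr rfl fun a _ => by rw [← hQ s a]
    have step2 : QG s h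
        = arm (PG P πi) (RG R πi) γ (fun s' => ∑ a', compose g πi πo s' a' * Q s' a') s h := by
      rw [step1, arm_G]
      rfl
    rw [step2]
    show RG R πi s h + γ * ∑ s', PG P πi s h s' * (∑ a', compose g πi πo s' a' * Q s' a') = _
    congr 1
    congr 1
    exact Finset.sum_congr rfl fun s' _ => by rw [hVc s']
  have hQG : Qpi (PG P πi) (RG R πi) γ πo = QG :=
    qpi_eq (PG_isKernel hP hπi) hπo hγ0 hγ1 hbell
  show ∑ h, πo s h * Qpi (PG P πi) (RG R πi) γ πo s h = ∑ a, compose g πi πo s a * Q s a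
  rw [hQG, hVc s]

lemma le_betaRstar (s : S) (a a' : A) (h : g a = g a') :
    R s a - R s a' ≤ betaRstar R g := by
  have hb : BddAbove (Set.range fun q : {q : S × A × A // g q.2.1 = g q.2.2} =>
      R q.1.1 q.1.2.1 - R q.1.1 q.1.2.2) := Set.Finite.bddAbove (Set.finite_range _)
  exact le_ciSup hb ⟨(s, a, a'), h⟩

lemma betaRstar_nonneg : 0 ≤ betaRstar R g := by
  have := le_betaRstar (R := R) (g := g) (Classical.arbitrary S)
    (Classical.arbitrary A) (Classical.arbitrary A) rfl
  linarith

lemma le_betaPstar (s : S) (h : G) :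
    1 - ∑ s', ⨅ a : {a : A // g a = h}, P s a.1 s' ≤ betaPstar P g := by
  have hb : BddAbove (Set.range fun p : S × G =>
      1 - ∑ s', ⨅ a : {a : A // g a = p.2}, P p.1 a.1 s') :=
    Set.Finite.bddAbove (Set.finite_range _)
  exact le_ciSup hb (s, h)

lemma betaPstar_nonneg (hP : IsKernel P) (hg : Function.Surjective g) :
    0 ≤ betaPstar P g := by
  set s := Classical.arbitrary S
  set a0 := Classical.arbitrary A
  refine le_trans ?_ (le_betaPstar (P := P) (g := g) s (g a0))
  have hm : ∀ s', (⨅ a : {a : A // g a = g a0}, P s a.1 s') ≤ P s a0 s' := fun s' =>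
    ciInf_le (Set.Finite.bddBelow (Set.finite_range _)) (⟨a0, rfl⟩ : {a : A // g a = g a0})
  have hsum : ∑ s', (⨅ a : {a : A // g a = g a0}, P s a.1 s') ≤ ∑ s', P s a0 s' :=
    Finset.sum_le_sum fun s' _ => hm s'
  rw [hP.sum_one] at hsum
  linarith

lemma sum_P_diff_le (hP : IsKernel P) {v : S → ℝ} (hv0 : ∀ s', 0 ≤ v s')
    {Vmax : ℝ} (hvM : ∀ s', v s' ≤ Vmax) (hVmax : 0 ≤ Vmax)
    (s : S) (a a' : A) (haa : g a = g a') :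
    ∑ s', (P s a s' - P s a' s') * v s' ≤ 2 * betaPstar P g * Vmax := by
  set m : S → ℝ := fun s' => ⨅ b : {b : A // g b = g a}, P s b.1 s' with hmdef
  have hm_le : ∀ (b : A), g b = g a → ∀ s', m s' ≤ P s b s' := fun b hb s' =>
    ciInf_le (Set.Finite.bddBelow (Set.finite_range _)) (⟨b, hb⟩ : {b : A // g b = g a})
  have habs : ∀ s', |P s a s' - P s a' s'| ≤ (P s a s' - m s') + (P s a' s' - m s') := by
    intro s'
    rw [abs_sub_le_iff]
    constructor
    · linarith [hm_le a' haa.symm s']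
    · linarith [hm_le a rfl s']
  have hterm : ∀ s', (P s a s' - P s a' s') * v s'
      ≤ ((P s a s' - m s') + (P s a' s' - m s')) * Vmax := by
    intro s'
    calc (P s a s' - P s a' s') * v s' ≤ |P s a s' - P s a' s'| * v s' :=
          mul_le_mul_of_nonneg_right (le_abs_self _) (hv0 s')
      _ ≤ |P s a s' - P s a' s'| * Vmax :=
          mul_le_mul_of_nonneg_left (hvM s') (abs_nonneg _)
      _ ≤ _ := mul_le_mul_of_nonneg_right (habs s') hVmax
  have hbp := le_betaPstar (P := P) (g := g) s (g a)
  calc ∑ s', (P s a s' - P s a' s') * v s'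
      ≤ ∑ s', ((P s a s' - m s') + (P s a' s' - m s')) * Vmax :=
        Finset.sum_le_sum fun s' _ => hterm s'
    _ = ((1 - ∑ s', m s') + (1 - ∑ s', m s')) * Vmax := by
        rw [← Finset.sum_mul]
        congr 1
        simp [Finset.sum_add_distrib, Finset.sum_sub_distrib, hP.sum_one]
    _ ≤ 2 * betaPstar P g * Vmax := by nlinarith

end Grouped

section Grouped2
set_option linter.unusedSectionVars false
variable {S A G : Type*} [Fintype S] [Fintype A] [Fintype G] [Nonempty S] [Nonempty A]
  [Nonempty G]
variable {P : S → A → S → ℝ} {R : S → A → ℝ} {γ : ℝ} {g : A → G} {πi : G → A → ℝ}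

lemma ToptG_le_Topt (hπi : IsLower g πi) (v : S → ℝ) (s : S) :
    Topt (PG P πi) (RG R πi) γ v s ≤ Topt P R γ v s := by
  apply Finset.sup'_le
  intro h _
  rw [arm_G]
  exact avg_le _ _ (hπi.nonneg h) (hπi.sum_one h) _
    (fun a => Finset.le_sup' (arm P R γ v s) (Finset.mem_univ a))

lemma Topt_le_ToptG (hP : IsKernel P) (hπi : IsLower g πi) (hγ0 : 0 ≤ γ)
    {v : S → ℝ} (hv0 : ∀ s', 0 ≤ v s') {Vmax : ℝ} (hvM : ∀ s', v s' ≤ Vmax)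
    (hVmax : 0 ≤ Vmax) (s : S) :
    Topt P R γ v s ≤ Topt (PG P πi) (RG R πi) γ v s
      + (betaRstar R g + γ * (2 * betaPstar P g * Vmax)) := by
  set ε := betaRstar R g + γ * (2 * betaPstar P g * Vmax) with hεdef
  apply Finset.sup'_le
  intro a _
  have harm : arm P R γ v s a ≤ arm (PG P πi) (RG R πi) γ v s (g a) + ε := by
    rw [arm_G]
    have expand : arm P R γ v s a = ∑ a', πi (g a) a' * arm P R γ v s a := by
      rw [← Finset.sum_mul, hπi.sum_one, one_mul]
    have hdiff : ∑ a', πi (g a) a' * (arm P R γ v s a - arm P R γ v s a') ≤ ε := by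
      calc ∑ a', πi (g a) a' * (arm P R γ v s a - arm P R γ v s a')
          ≤ ∑ a', πi (g a) a' * ε := by
            refine Finset.sum_le_sum fun a' _ => ?_
            rcases eq_or_ne (πi (g a) a') 0 with h0 | h0
            · simp [h0]
            · have hga : g a' = g a := by
                by_contra hne
                exact h0 (hπi.support _ _ hne)
              refine mul_le_mul_of_nonneg_left ?_ (hπi.nonneg _ _)
              have hRb : R s a - R s a' ≤ betaRstar R g := le_betaRstar s a a' hga.symm
              have hPb : ∑ s', (P s a s' - P s a' s') * v s' ≤ 2 * betaPstar P g * Vmax :=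
                sum_P_diff_le hP hv0 hvM hVmax s a a' hga.symm
              have hsub : (∑ s', P s a s' * v s') - (∑ s', P s a' s' * v s')
                  = ∑ s', (P s a s' - P s a' s') * v s' := by
                simp [sub_mul, Finset.sum_sub_distrib]
              have h4 := mul_le_mul_of_nonneg_left (hsub.symm ▸ hPb : _ ≤ _) hγ0
              rw [mul_sub] at h4
              simp only [arm, hεdef]
              linarith
        _ = ε := by rw [← Finset.sum_mul, hπi.sum_one, one_mul]
    have hsplit : ∑ a', πi (g a) a' * (arm P R γ v s a - arm P R γ v s a')
        = (∑ a', πi (g a) a' * arm P R γ v s a)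
          - ∑ a', πi (g a) a' * arm P R γ v s a' := by
      simp [mul_sub, Finset.sum_sub_distrib]
    rw [expand]
    linarith [hsplit ▸ hdiff]
  refine harm.trans (add_le_add ?_ le_rfl)
  exact Finset.le_sup' (arm (PG P πi) (RG R πi) γ v s) (Finset.mem_univ (g a))

end Grouped2

theorem statement_1 {S A G : Type*} [Fintype S] [Fintype A] [Fintype G]
    [Nonempty S] [Nonempty A]
    (P : S → A → S → ℝ) (R : S → A → ℝ) (γ : ℝ)
    (hP : IsKernel P) (hR : ∀ s a, 0 ≤ R s a ∧ R s a ≤ 1)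
    (hγ0 : 0 ≤ γ) (hγ1 : γ < 1)
    (g : A → G) (hg : Function.Surjective g)
    (πi : G → A → ℝ) (hπi : IsLower g πi)
    (πoStar : S → G → ℝ) (hπoStar : IsPolicy πoStar)
    (hopt : ∀ πo : S → G → ℝ, IsPolicy πo → ∀ s,
      Vpi P R γ (compose g πi πo) s ≤ Vpi P R γ (compose g πi πoStar) s) :
    supNorm (fun s => Vstar P R γ s - Vpi P R γ (compose g πi πoStar) s)
      ≤ 2 * (betaRstar R g / (1 - γ) + γ * betaPstar P g / (1 - γ) ^ 2) := by
  haveI : Nonempty G := ⟨g (Classical.arbitrary A)⟩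
  have hPG := PG_isKernel hP hπi
  obtain ⟨v, hvfix⟩ := exists_Topt_fixed (p := P) (r := R) hP hγ0 hγ1
  obtain ⟨w, hwfix⟩ := exists_Topt_fixed (p := PG P πi) (r := RG R πi) hPG hγ0 hγ1
  have hvB := vfix_bounds hP hR hγ0 hγ1 hvfix
  have hVstar : Vstar P R γ = v := vstar_eq_vfix hP hγ0 hγ1 hvfix
  obtain ⟨pihat, hpihat, hpihatval⟩ := exists_greedy hPG hγ0 hγ1 hwfix
  have hWeq : ∀ s, Vpi P R γ (compose g πi πoStar) s = w s := by
    intro s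
    apply le_antisymm
    · rw [← vpi_compose hP hπi hγ0 hγ1 hπoStar s]
      exact vpi_le_vfix hPG hγ0 hγ1 hwfix hπoStar s
    · calc w s = Vpi (PG P πi) (RG R πi) γ pihat s := (hpihatval s).symm
        _ = Vpi P R γ (compose g πi pihat) s := vpi_compose hP hπi hγ0 hγ1 hpihat s
        _ ≤ Vpi P R γ (compose g πi πoStar) s := hopt pihat hpihat s
  have h1γ : (0:ℝ) < 1 - γ := by linarith
  set Vmax : ℝ := 1 / (1 - γ) with hVmaxdef
  have hVmax0 : 0 ≤ Vmax := by positivity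
  set ε := betaRstar R g + γ * (2 * betaPstar P g * Vmax) with hεdef
  have hβR0 : 0 ≤ betaRstar R g := betaRstar_nonneg (S := S)
  have hβP0 : 0 ≤ betaPstar P g := betaPstar_nonneg hP hg
  have hε0 : 0 ≤ ε := by
    have h5 : 0 ≤ γ * (2 * betaPstar P g * Vmax) := by positivity
    rw [hεdef]; linarith
  have hneS : (Finset.univ : Finset S).Nonempty := Finset.univ_nonempty
  set D := Finset.univ.sup' hneS (fun s => |v s - w s|) with hDdef
  have hDmem : ∀ s, |v s - w s| ≤ D := fun s =>
    Finset.le_sup' (fun s => |v s - w s|) (Finset.mem_univ s)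
  have hD0 : 0 ≤ D := le_trans (abs_nonneg _) (hDmem (Classical.arbitrary S))
  have key : ∀ s, |v s - w s| ≤ ε + γ * D := by
    intro s
    have h2 : |Topt (PG P πi) (RG R πi) γ v s - Topt (PG P πi) (RG R πi) γ w s| ≤ γ * D :=
      Topt_sub_abs hPG hγ0 hD0 hDmem s
    have h2' := (abs_le.1 h2).2
    have h2'' := (abs_le.1 h2).1
    have h3 : Topt (PG P πi) (RG R πi) γ w s = w s := congrFun hwfix s
    have h4 : Topt P R γ v s = v s := congrFun hvfix s
    rw [abs_sub_le_iff]
    constructor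
    · have h1 : Topt P R γ v s ≤ Topt (PG P πi) (RG R πi) γ v s + ε :=
        Topt_le_ToptG hP hπi hγ0 (fun s' => (hvB s').1) (fun s' => (hvB s').2) hVmax0 s
      linarith
    · have h5 : Topt (PG P πi) (RG R πi) γ v s ≤ Topt P R γ v s := ToptG_le_Topt hπi v s
      linarith
  obtain ⟨s0, -, hs0⟩ := Finset.exists_mem_eq_sup' hneS (fun s => |v s - w s|)
  have hDD : D ≤ ε + γ * D := by
    calc D = |v s0 - w s0| := hDdef.trans hs0
      _ ≤ ε + γ * D := key s0
  have hDfin : D ≤ ε / (1 - γ) := by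
    rw [le_div_iff₀ h1γ]
    nlinarith
  have hfinal : ε / (1 - γ)
      ≤ 2 * (betaRstar R g / (1 - γ) + γ * betaPstar P g / (1 - γ) ^ 2) := by
    have he : ε / (1 - γ)
        = betaRstar R g / (1 - γ) + 2 * (γ * betaPstar P g / (1 - γ) ^ 2) := by
      rw [hεdef, hVmaxdef]
      field_simp
    have hx : 0 ≤ betaRstar R g / (1 - γ) := div_nonneg hβR0 h1γ.le
    rw [he]
    linarith
  rw [supNorm]
  refine ciSup_le fun s => ?_
  have heq : Vstar P R γ s - Vpi P R γ (compose g πi πoStar) s = v s - w s := by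
    rw [congrFun hVstar s, hWeq s]
  rw [heq]
  exact le_trans (hDmem s) (le_trans hDfin hfinal)

end MDPGroup
end

section
/- Let M = (S, A, P, R, γ) be a finite discounted MDP with rewards in [0,1], let Q : S×A → ℝ be any function, and let π_Q be a deterministic policy with π_Q(s) ∈ argmax_a Q(s,a). Then ‖V_M^* − V_M^{π_Q}‖_∞ ≤ 2‖Q_M^* − Q‖_∞/(1−γ). -/
open scoped BigOperators Classical

namespace MDPGroup

variable {S A G : Type*}

/-- Bellman optimality operator. -/
noncomputable def bellmanOpt [Fintype S] [Fintype A] (P : S → A → S → ℝ) (R : S → A → ℝ)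
    (γ : ℝ) (Q : S → A → ℝ) : S → A → ℝ :=
  fun s a => R s a + γ * ∑ s', P s a s' * ⨆ a', Q s' a'

/-- The randomized policy corresponding to a deterministic policy. -/
noncomputable def detPolicy (f : S → A) : S → A → ℝ :=
  fun s a => if a = f s then 1 else 0

/-!
Let `ε = ‖Q* − Q‖` and let `a₀` maximise `Q*(s, ·)`. As `πQ s` maximises `Q(s, ·)`,
`V*(s) ≤ Q*(s, a₀) ≤ Q*(s, πQ s) + 2ε`; moreover `Q*(s, πQ s) ≤ R(s, πQ s) + γ P V*(s, πQ s)`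
while `V^{πQ}(s) = R(s, πQ s) + γ P V^{πQ}(s, πQ s)`. Hence
`‖V* − V^{πQ}‖ ≤ 2ε + γ ‖V* − V^{πQ}‖`.
The suprema defining `V*` and `Q*` are over bounded families: `Q^π` is the fixed point of a
`γ`-contraction sending `0` to `R`, so `‖Q^π‖ ≤ ‖R‖ / (1 − γ)`.
-/

section supNorm

variable {ι : Type*} {f : ι → ℝ}

lemma abs_le_supNorm [Finite ι] (f : ι → ℝ) (i : ι) : |f i| ≤ supNorm f :=
  le_ciSup (f := fun i => |f i|) (Set.finite_range _).bddAbove i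

lemma le_supNorm [Finite ι] (f : ι → ℝ) (i : ι) : f i ≤ supNorm f :=
  (le_abs_self _).trans (abs_le_supNorm f i)

lemma supNorm_nonneg : 0 ≤ supNorm f :=
  Real.iSup_nonneg fun _ => abs_nonneg _

lemma supNorm_le {C : ℝ} (h : ∀ i, |f i| ≤ C) (hC : 0 ≤ C) : supNorm f ≤ C :=
  Real.iSup_le h hC

end supNorm

lemma sum_mul_le_of_forall_le {ι : Type*} [Fintype ι] {w f : ι → ℝ} {C : ℝ}
    (hw : ∀ i, 0 ≤ w i) (hs : ∑ i, w i = 1) (hf : ∀ i, f i ≤ C) : ∑ i, w i * f i ≤ C :=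
  calc ∑ i, w i * f i ≤ ∑ i, w i * C :=
        Finset.sum_le_sum fun i _ => mul_le_mul_of_nonneg_left (hf i) (hw i)
    _ = C := by rw [← Finset.sum_mul, hs, one_mul]

lemma abs_sum_mul_le_of_forall_abs_le {ι : Type*} [Fintype ι] {w f : ι → ℝ} {C : ℝ}
    (hw : ∀ i, 0 ≤ w i) (hs : ∑ i, w i = 1) (hf : ∀ i, |f i| ≤ C) :
    |∑ i, w i * f i| ≤ C := by
  refine abs_le.2 ⟨?_, sum_mul_le_of_forall_le hw hs fun i => (abs_le.1 (hf i)).2⟩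
  have := sum_mul_le_of_forall_le (f := -f) hw hs fun i => neg_le.1 (abs_le.1 (hf i)).1
  simp only [Pi.neg_apply, mul_neg, Finset.sum_neg_distrib] at this
  linarith

lemma isPolicy_detPolicy [Fintype A] (f : S → A) : IsPolicy (detPolicy f) where
  nonneg s a := by unfold detPolicy; split_ifs <;> norm_num
  sum_one s := by simp [detPolicy]

section Bellman

variable [Fintype S] [Fintype A] {P : S → A → S → ℝ} {R : S → A → ℝ} {γ : ℝ} {π : S → A → ℝ}

lemma Vpi_detPolicy (f : S → A) (s : S) :
    Vpi P R γ (detPolicy f) s = Qpi P R γ (detPolicy f) s (f s) := by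
  simp [Vpi, detPolicy]

variable (P R γ π) in
noncomputable def bellmanPolicy (Q : S → A → ℝ) : S → A → ℝ :=
  fun s a => R s a + γ * ∑ s', P s a s' * ∑ a', π s' a' * Q s' a'

lemma isBellman_iff_isFixedPt {Q : S → A → ℝ} :
    IsBellman P R γ π Q ↔ Function.IsFixedPt (bellmanPolicy P R γ π) Q :=
  ⟨fun h => funext₂ fun s a => (h s a).symm, fun h s a => (congrFun₂ h s a).symm⟩

lemma bellmanPolicy_zero : bellmanPolicy P R γ π 0 = R := by
  ext s a
  simp [bellmanPolicy]

lemma lipschitzWith_bellmanPolicy (hP : IsKernel P) (hπ : IsPolicy π) (hγ : 0 ≤ γ) :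
    LipschitzWith ⟨γ, hγ⟩ (bellmanPolicy P R γ π) := by
  refine LipschitzWith.of_dist_le_mul fun Q Q' => ?_
  have hd : 0 ≤ γ * dist Q Q' := mul_nonneg hγ dist_nonneg
  refine (dist_pi_le_iff hd).2 fun s => (dist_pi_le_iff hd).2 fun a => ?_
  have hQ : ∀ s' a', |Q s' a' - Q' s' a'| ≤ dist Q Q' := fun s' a' =>
    (dist_le_pi_dist (Q s') (Q' s') a').trans (dist_le_pi_dist Q Q' s')
  have hdiff : bellmanPolicy P R γ π Q s a - bellmanPolicy P R γ π Q' s a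
      = γ * ∑ s', P s a s' * ∑ a', π s' a' * (Q s' a' - Q' s' a') := by
    simp only [bellmanPolicy, mul_sub, Finset.sum_sub_distrib]
    ring
  rw [Real.dist_eq, hdiff, abs_mul, abs_of_nonneg hγ]
  exact mul_le_mul_of_nonneg_left (abs_sum_mul_le_of_forall_abs_le (hP.nonneg s a)
    (hP.sum_one s a) fun s' => abs_sum_mul_le_of_forall_abs_le (hπ.nonneg s') (hπ.sum_one s')
      (hQ s')) hγ

lemma contractingWith_bellmanPolicy (hP : IsKernel P) (hπ : IsPolicy π) (hγ0 : 0 ≤ γ)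
    (hγ1 : γ < 1) : ContractingWith ⟨γ, hγ0⟩ (bellmanPolicy P R γ π) :=
  ⟨hγ1, lipschitzWith_bellmanPolicy hP hπ hγ0⟩

variable (hP : IsKernel P) (hγ0 : 0 ≤ γ) (hγ1 : γ < 1)
include hP hγ0 hγ1

lemma isBellman_Qpi (hπ : IsPolicy π) : IsBellman P R γ π (Qpi P R γ π) := by
  have hex : ∃ Q, IsBellman P R γ π Q := ⟨_, isBellman_iff_isFixedPt.2
    (contractingWith_bellmanPolicy hP hπ hγ0 hγ1).fixedPoint_isFixedPt⟩
  rw [Qpi, dif_pos hex]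
  exact hex.choose_spec

lemma Qpi_eq (hπ : IsPolicy π) (s : S) (a : A) :
    Qpi P R γ π s a = R s a + γ * ∑ s', P s a s' * Vpi P R γ π s' :=
  isBellman_Qpi hP hγ0 hγ1 hπ s a

lemma Qpi_le (hπ : IsPolicy π) (s : S) (a : A) : Qpi P R γ π s a ≤ ‖R‖ / (1 - γ) := by
  have h := (contractingWith_bellmanPolicy hP hπ hγ0 hγ1).dist_le_of_fixedPoint 0
    (isBellman_iff_isFixedPt.1 (isBellman_Qpi (R := R) hP hγ0 hγ1 hπ))
  rw [bellmanPolicy_zero, dist_zero_left, dist_zero_left] at h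
  calc Qpi P R γ π s a ≤ ‖Qpi P R γ π s a‖ := Real.le_norm_self _
    _ ≤ ‖Qpi P R γ π‖ := (norm_le_pi_norm _ a).trans (norm_le_pi_norm _ s)
    _ ≤ ‖R‖ / (1 - γ) := h

lemma Vpi_le (hπ : IsPolicy π) (s : S) : Vpi P R γ π s ≤ ‖R‖ / (1 - γ) :=
  sum_mul_le_of_forall_le (hπ.nonneg s) (hπ.sum_one s) fun a => Qpi_le hP hγ0 hγ1 hπ s a

lemma Qpi_le_Qstar (hπ : IsPolicy π) (s : S) (a : A) : Qpi P R γ π s a ≤ Qstar P R γ s a :=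
  le_ciSup (f := fun π : {π // IsPolicy π} => Qpi P R γ π.1 s a)
    ⟨_, Set.forall_mem_range.2 fun π => Qpi_le hP hγ0 hγ1 π.2 s a⟩ ⟨π, hπ⟩

lemma Vpi_le_Vstar (hπ : IsPolicy π) (s : S) : Vpi P R γ π s ≤ Vstar P R γ s :=
  le_ciSup (f := fun π : {π // IsPolicy π} => Vpi P R γ π.1 s)
    ⟨_, Set.forall_mem_range.2 fun π => Vpi_le hP hγ0 hγ1 π.2 s⟩ ⟨π, hπ⟩

variable [Nonempty A]

instance nonempty_isPolicy : Nonempty {π : S → A → ℝ // IsPolicy π} :=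
  ⟨⟨_, isPolicy_detPolicy fun _ => Classical.arbitrary A⟩⟩

lemma Qstar_le (s : S) (a : A) :
    Qstar P R γ s a ≤ R s a + γ * ∑ s', P s a s' * Vstar P R γ s' :=
  ciSup_le fun π => by
    rw [Qpi_eq hP hγ0 hγ1 π.2]
    gcongr with s'
    · exact hP.nonneg s a s'
    · exact Vpi_le_Vstar hP hγ0 hγ1 π.2 s'

lemma Vstar_le_Qstar {s : S} {a₀ : A} (hmax : ∀ a, Qstar P R γ s a ≤ Qstar P R γ s a₀) :
    Vstar P R γ s ≤ Qstar P R γ s a₀ :=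
  ciSup_le fun π => sum_mul_le_of_forall_le (π.2.nonneg s) (π.2.sum_one s) fun a =>
    (Qpi_le_Qstar hP hγ0 hγ1 π.2 s a).trans (hmax a)

end Bellman

lemma Vstar_sub_Vpi_greedy_le [Fintype S] [Fintype A] {P : S → A → S → ℝ} {R : S → A → ℝ}
    {γ : ℝ} (hP : IsKernel P) (hγ0 : 0 ≤ γ) (hγ1 : γ < 1) {Q : S → A → ℝ} {πQ : S → A}
    (hgreedy : ∀ s a, Q s a ≤ Q s (πQ s)) {ε D : ℝ}
    (hε : ∀ s a, |Qstar P R γ s a - Q s a| ≤ ε)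
    (hD : ∀ s, Vstar P R γ s - Vpi P R γ (detPolicy πQ) s ≤ D) (s : S) :
    Vstar P R γ s - Vpi P R γ (detPolicy πQ) s ≤ 2 * ε + γ * D := by
  have : Nonempty A := ⟨πQ s⟩
  obtain ⟨a₀, ha₀⟩ := Finite.exists_max (Qstar P R γ s)
  have hVstar := Vstar_le_Qstar hP hγ0 hγ1 ha₀
  have hgap : Qstar P R γ s a₀ ≤ Qstar P R γ s (πQ s) + 2 * ε := by
    linarith [(abs_le.1 (hε s a₀)).2, (abs_le.1 (hε s (πQ s))).1, hgreedy s a₀]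
  have hQstar := Qstar_le (R := R) hP hγ0 hγ1 s (πQ s)
  have hVpi : Vpi P R γ (detPolicy πQ) s
      = R s (πQ s) + γ * ∑ s', P s (πQ s) s' * Vpi P R γ (detPolicy πQ) s' := by
    rw [Vpi_detPolicy, Qpi_eq hP hγ0 hγ1 (isPolicy_detPolicy πQ)]
  have havg : ∑ s', P s (πQ s) s' * Vstar P R γ s'
      - ∑ s', P s (πQ s) s' * Vpi P R γ (detPolicy πQ) s' ≤ D := by
    simp only [← Finset.sum_sub_distrib, ← mul_sub]
    exact sum_mul_le_of_forall_le (hP.nonneg s (πQ s)) (hP.sum_one s (πQ s)) hD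
  linarith [mul_le_mul_of_nonneg_left havg hγ0]

lemma supNorm_Vstar_sub_Vpi_greedy_le [Fintype S] [Fintype A] {P : S → A → S → ℝ}
    {R : S → A → ℝ} {γ : ℝ} (hP : IsKernel P) (hγ0 : 0 ≤ γ) (hγ1 : γ < 1) {Q : S → A → ℝ}
    {πQ : S → A} (hgreedy : ∀ s a, Q s a ≤ Q s (πQ s)) :
    supNorm (fun s => Vstar P R γ s - Vpi P R γ (detPolicy πQ) s)
      ≤ 2 * supNorm (fun p : S × A => Qstar P R γ p.1 p.2 - Q p.1 p.2)
        + γ * supNorm (fun s => Vstar P R γ s - Vpi P R γ (detPolicy πQ) s) := by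
  refine supNorm_le (fun s => ?_)
    (add_nonneg (mul_nonneg zero_le_two supNorm_nonneg) (mul_nonneg hγ0 supNorm_nonneg))
  rw [abs_of_nonneg (sub_nonneg.2 (Vpi_le_Vstar hP hγ0 hγ1 (isPolicy_detPolicy πQ) s))]
  exact Vstar_sub_Vpi_greedy_le hP hγ0 hγ1 hgreedy
    (fun s a => abs_le_supNorm (fun p : S × A => Qstar P R γ p.1 p.2 - Q p.1 p.2) (s, a))
    (le_supNorm _) s

theorem statement_6_general {S A : Type*} [Fintype S] [Fintype A]
    (P : S → A → S → ℝ) (R : S → A → ℝ) (γ : ℝ)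
    (hP : IsKernel P)
    (hγ0 : 0 ≤ γ) (hγ1 : γ < 1)
    (Q : S → A → ℝ) (πQ : S → A)
    (hgreedy : ∀ s a, Q s a ≤ Q s (πQ s)) :
    supNorm (fun s => Vstar P R γ s - Vpi P R γ (detPolicy πQ) s)
      ≤ 2 * supNorm (fun p : S × A => Qstar P R γ p.1 p.2 - Q p.1 p.2) / (1 - γ) := by
  have h := supNorm_Vstar_sub_Vpi_greedy_le (R := R) hP hγ0 hγ1 hgreedy
  rw [le_div_iff₀ (sub_pos.2 hγ1)]
  linarith

theorem statement_6 {S A : Type*} [Fintype S] [Fintype A] [Nonempty S] [Nonempty A]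
    (P : S → A → S → ℝ) (R : S → A → ℝ) (γ : ℝ)
    (hP : IsKernel P) (hR : ∀ s a, 0 ≤ R s a ∧ R s a ≤ 1)
    (hγ0 : 0 ≤ γ) (hγ1 : γ < 1)
    (Q : S → A → ℝ) (πQ : S → A)
    (hgreedy : ∀ s a, Q s a ≤ Q s (πQ s)) :
    supNorm (fun s => Vstar P R γ s - Vpi P R γ (detPolicy πQ) s)
      ≤ 2 * supNorm (fun p : S × A => Qstar P R γ p.1 p.2 - Q p.1 p.2) / (1 - γ) :=
  statement_6_general P R γ hP hγ0 hγ1 Q πQ hgreedy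

end MDPGroup
end

section
/- Let M = (S, A, P, R, γ) be a finite discounted MDP with rewards in [0,1], g : A → G a grouping function, and suppose M admits a linear decomposition with deviation factors (β_P, β_R) and components (b_P, b_R, P₁, P₂, R₁, R₂). Define the MDP M₁ = (S, A, P₁', R₁', γ) with P₁'(s'|s,a) = P₁(s'|s,g(a)) and R₁'(s,a) = R₁(s,g(a)), and let π_{M₁}^* be an optimal policy of M₁. Then ‖V_M^* − V_M^{π_{M₁}^*}‖_∞ ≤ 2(β_R/(1−γ) + γ·β_P/(1−γ)²). -/
open scoped BigOperators Classical

namespace MDPGroup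

variable {S A G : Type*}

section FixedPoint

variable [Fintype S] [Fintype A]

lemma wsum_abs_le {ι : Type*} [Fintype ι] {w v : ι → ℝ} {c : ℝ}
    (hw : ∀ i, 0 ≤ w i) (hw1 : ∑ i, w i = 1) (hv : ∀ i, |v i| ≤ c) :
    |∑ i, w i * v i| ≤ c := by
  calc |∑ i, w i * v i| ≤ ∑ i, |w i * v i| := Finset.abs_sum_le_sum_abs _ _
    _ ≤ ∑ i : ι, w i * c := by
        refine Finset.sum_le_sum fun i _ => ?_
        rw [abs_mul, abs_of_nonneg (hw i)]
        exact mul_le_mul_of_nonneg_left (hv i) (hw i)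
    _ = c := by rw [← Finset.sum_mul, hw1, one_mul]

lemma wsum_mem {ι : Type*} [Fintype ι] {w v : ι → ℝ} {c : ℝ}
    (hw : ∀ i, 0 ≤ w i) (hw1 : ∑ i, w i = 1) (hv : ∀ i, 0 ≤ v i ∧ v i ≤ c) :
    0 ≤ ∑ i, w i * v i ∧ ∑ i, w i * v i ≤ c := by
  constructor
  · exact Finset.sum_nonneg fun i _ => mul_nonneg (hw i) (hv i).1
  · calc ∑ i, w i * v i ≤ ∑ i : ι, w i * c :=
        Finset.sum_le_sum fun i _ => mul_le_mul_of_nonneg_left (hv i).2 (hw i)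
      _ = c := by rw [← Finset.sum_mul, hw1, one_mul]

/-- The Bellman operator. -/
noncomputable def Top (P : S → A → S → ℝ) (R : S → A → ℝ) (γ : ℝ) (π : S → A → ℝ)
    (Q : S → A → ℝ) : S → A → ℝ :=
  fun s a => R s a + γ * ∑ s', P s a s' * ∑ a', π s' a' * Q s' a'

lemma isBellman_iff {P : S → A → S → ℝ} {R : S → A → ℝ} {γ : ℝ} {π Q : S → A → ℝ} :
    IsBellman P R γ π Q ↔ Top P R γ π Q = Q := by
  constructor
  · intro h; funext s a; exact (h s a).symm
  · intro h s a; exact (congrFun (congrFun h s) a).symm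

lemma Top_dist {P : S → A → S → ℝ} {R : S → A → ℝ} {γ : ℝ} {π : S → A → ℝ}
    (hP : IsKernel P) (hπ : IsPolicy π) (hγ0 : 0 ≤ γ) (Q Q' : S → A → ℝ) :
    dist (Top P R γ π Q) (Top P R γ π Q') ≤ γ * dist Q Q' := by
  have key : ∀ s', |(∑ a', π s' a' * Q s' a') - (∑ a', π s' a' * Q' s' a')| ≤ dist Q Q' := by
    intro s'
    rw [← Finset.sum_sub_distrib]
    simp only [← mul_sub]
    refine wsum_abs_le (hπ.nonneg s') (hπ.sum_one s') (fun a' => ?_)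
    rw [← Real.dist_eq]
    exact (dist_le_pi_dist (Q s') (Q' s') a').trans (dist_le_pi_dist Q Q' s')
  rw [dist_pi_le_iff (mul_nonneg hγ0 dist_nonneg)]
  intro s
  rw [dist_pi_le_iff (mul_nonneg hγ0 dist_nonneg)]
  intro a
  rw [Real.dist_eq]
  have h1 : Top P R γ π Q s a - Top P R γ π Q' s a
      = γ * ∑ s', P s a s' *
          ((∑ a', π s' a' * Q s' a') - (∑ a', π s' a' * Q' s' a')) := by
    simp only [Top, mul_sub, Finset.sum_sub_distrib]
    ring
  rw [h1, abs_mul, abs_of_nonneg hγ0]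
  exact mul_le_mul_of_nonneg_left
    (wsum_abs_le (hP.nonneg s a) (hP.sum_one s a) key) hγ0

lemma Top_preserves {P : S → A → S → ℝ} {R : S → A → ℝ} {γ : ℝ} {π : S → A → ℝ}
    (hP : IsKernel P) (hR : ∀ s a, 0 ≤ R s a ∧ R s a ≤ 1)
    (hγ0 : 0 ≤ γ) (hγ1 : γ < 1) (hπ : IsPolicy π) {Q : S → A → ℝ}
    (hQ : ∀ s a, 0 ≤ Q s a ∧ Q s a ≤ 1 / (1 - γ)) :
    ∀ s a, 0 ≤ Top P R γ π Q s a ∧ Top P R γ π Q s a ≤ 1 / (1 - γ) := by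
  intro s a
  have h1γ : 0 < 1 - γ := by linarith
  have hW : ∀ s', 0 ≤ (∑ a', π s' a' * Q s' a') ∧
      (∑ a', π s' a' * Q s' a') ≤ 1 / (1 - γ) := fun s' =>
    wsum_mem (hπ.nonneg s') (hπ.sum_one s') (fun a' => hQ s' a')
  have hS := wsum_mem (hP.nonneg s a) (hP.sum_one s a) hW
  constructor
  · exact add_nonneg (hR s a).1 (mul_nonneg hγ0 hS.1)
  · have : γ * (∑ s', P s a s' * ∑ a', π s' a' * Q s' a') ≤ γ * (1 / (1 - γ)) :=
      mul_le_mul_of_nonneg_left hS.2 hγ0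
    have h2 : 1 + γ * (1 / (1 - γ)) = 1 / (1 - γ) := by field_simp; ring
    calc Top P R γ π Q s a ≤ 1 + γ * (1 / (1 - γ)) :=
          add_le_add (hR s a).2 this
      _ = 1 / (1 - γ) := h2

lemma Qpi_spec {P : S → A → S → ℝ} {R : S → A → ℝ} {γ : ℝ} {π : S → A → ℝ}
    (hP : IsKernel P) (hR : ∀ s a, 0 ≤ R s a ∧ R s a ≤ 1)
    (hγ0 : 0 ≤ γ) (hγ1 : γ < 1) (hπ : IsPolicy π) :
    IsBellman P R γ π (Qpi P R γ π) ∧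
      ∀ s a, 0 ≤ Qpi P R γ π s a ∧ Qpi P R γ π s a ≤ 1 / (1 - γ) := by
  set K : NNReal := ⟨γ, hγ0⟩ with hKdef
  have hK : LipschitzWith K (Top P R γ π) :=
    LipschitzWith.of_dist_le_mul fun Q Q' => Top_dist hP hπ hγ0 Q Q'
  have hc : ContractingWith K (Top P R γ π) := ⟨by exact_mod_cast hγ1, hK⟩
  set Qf := ContractingWith.fixedPoint (Top P R γ π) hc with hQf
  have hfix : Top P R γ π Qf = Qf := hc.fixedPoint_isFixedPt
  have hex : ∃ Q : S → A → ℝ, IsBellman P R γ π Q := ⟨Qf, isBellman_iff.2 hfix⟩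
  have hB : IsBellman P R γ π (Qpi P R γ π) := by
    rw [Qpi, dif_pos hex]; exact hex.choose_spec
  have hQfeq : Qpi P R γ π = Qf :=
    hc.fixedPoint_unique (isBellman_iff.1 hB)
  refine ⟨hB, ?_⟩
  rw [hQfeq]
  -- bounds via iterates from 0
  have hiter : ∀ n, ∀ s a, 0 ≤ ((Top P R γ π)^[n] 0) s a ∧
      ((Top P R γ π)^[n] 0) s a ≤ 1 / (1 - γ) := by
    intro n
    induction n with
    | zero =>
        intro s a
        simp only [Function.iterate_zero, id_eq, Pi.zero_apply]
        have h1γ : (0:ℝ) < 1 - γ := by linarith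
        exact ⟨le_refl 0, by positivity⟩
    | succ n ih =>
        rw [Function.iterate_succ_apply']
        exact Top_preserves hP hR hγ0 hγ1 hπ ih
  have htend := hc.tendsto_iterate_fixedPoint (0 : S → A → ℝ)
  intro s a
  have htend2 : Filter.Tendsto (fun n => ((Top P R γ π)^[n] 0) s a)
      Filter.atTop (nhds (Qf s a)) := by
    have h1 := tendsto_pi_nhds.1 htend s
    exact tendsto_pi_nhds.1 h1 a
  exact ⟨ge_of_tendsto' htend2 (fun n => (hiter n s a).1),
    le_of_tendsto' htend2 (fun n => (hiter n s a).2)⟩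

lemma Vpi_bounds {P : S → A → S → ℝ} {R : S → A → ℝ} {γ : ℝ} {π : S → A → ℝ}
    (hP : IsKernel P) (hR : ∀ s a, 0 ≤ R s a ∧ R s a ≤ 1)
    (hγ0 : 0 ≤ γ) (hγ1 : γ < 1) (hπ : IsPolicy π) :
    ∀ s, 0 ≤ Vpi P R γ π s ∧ Vpi P R γ π s ≤ 1 / (1 - γ) := fun s =>
  wsum_mem (hπ.nonneg s) (hπ.sum_one s) (fun a => (Qpi_spec hP hR hγ0 hγ1 hπ).2 s a)

end FixedPoint


/-- A linear decomposition of `(P, R)` along the grouping `g`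
with deviation factors `(βP, βR)`. -/
structure IsDecomp [Fintype S] (P : S → A → S → ℝ) (R : S → A → ℝ)
    (g : A → G) (βP βR : ℝ) (bP bR : S → A → ℝ) (P1 : S → G → S → ℝ)
    (P2 : S → A → S → ℝ) (R1 : S → G → ℝ) (R2 : S → A → ℝ) : Prop where
  bP_nonneg : ∀ s a, 0 ≤ bP s a
  bP_le_one : ∀ s a, bP s a ≤ 1
  bR_nonneg : ∀ s a, 0 ≤ bR s a
  bR_le_one : ∀ s a, bR s a ≤ 1
  bP_le : ∀ s a, bP s a ≤ βP
  bR_le : ∀ s a, bR s a ≤ βR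
  P1_nonneg : ∀ s h s', 0 ≤ P1 s h s'
  P1_sum : ∀ s h, ∑ s', P1 s h s' = 1
  P2_nonneg : ∀ s a s', 0 ≤ P2 s a s'
  P2_sum : ∀ s a, ∑ s', P2 s a s' = 1
  R1_nonneg : ∀ s h, 0 ≤ R1 s h
  R1_le_one : ∀ s h, R1 s h ≤ 1
  R2_nonneg : ∀ s a, 0 ≤ R2 s a
  R2_le_one : ∀ s a, R2 s a ≤ 1
  P_eq : ∀ s a s', P s a s' = (1 - bP s a) * P1 s (g a) s' + bP s a * P2 s a s'
  R_eq : ∀ s a, R s a = (1 - bR s a) * R1 s (g a) + bR s a * R2 s a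



lemma sim_bound {S A G : Type*} [Fintype S] [Fintype A] [Fintype G]
    [Nonempty S] [Nonempty A]
    (P : S → A → S → ℝ) (R : S → A → ℝ) (γ : ℝ)
    (hP : IsKernel P) (hR : ∀ s a, 0 ≤ R s a ∧ R s a ≤ 1)
    (hγ0 : 0 ≤ γ) (hγ1 : γ < 1)
    (g : A → G) (βP βR : ℝ) (hβP0 : 0 ≤ βP) (hβR0 : 0 ≤ βR)
    (bP bR : S → A → ℝ) (P1 : S → G → S → ℝ) (P2 : S → A → S → ℝ)
    (R1 : S → G → ℝ) (R2 : S → A → ℝ)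
    (hdec : IsDecomp P R g βP βR bP bR P1 P2 R1 R2)
    (π : S → A → ℝ) (hπ : IsPolicy π) :
    ∀ s, |Vpi P R γ π s
        - Vpi (fun s a s' => P1 s (g a) s') (fun s a => R1 s (g a)) γ π s|
      ≤ βR / (1 - γ) + γ * βP / (1 - γ) ^ 2 := by
  have h1γ : (0:ℝ) < 1 - γ := by linarith
  set P1' : S → A → S → ℝ := fun s a s' => P1 s (g a) s' with hP1'def
  set R1' : S → A → ℝ := fun s a => R1 s (g a) with hR1'def
  have hP1 : IsKernel P1' :=
    ⟨fun s a s' => hdec.P1_nonneg s (g a) s', fun s a => hdec.P1_sum s (g a)⟩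
  have hR1 : ∀ s a, 0 ≤ R1' s a ∧ R1' s a ≤ 1 :=
    fun s a => ⟨hdec.R1_nonneg s (g a), hdec.R1_le_one s (g a)⟩
  obtain ⟨hB, hQb⟩ := Qpi_spec hP hR hγ0 hγ1 hπ
  obtain ⟨hB1, hQ1b⟩ := Qpi_spec hP1 hR1 hγ0 hγ1 hπ
  set Q := Qpi P R γ π with hQdef
  set Q1 := Qpi P1' R1' γ π with hQ1def
  set W : S → ℝ := fun s' => ∑ a', π s' a' * Q s' a' with hWdef
  set W1 : S → ℝ := fun s' => ∑ a', π s' a' * Q1 s' a' with hW1def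
  obtain ⟨p, hp⟩ := Finite.exists_max (fun p : S × A => |Q p.1 p.2 - Q1 p.1 p.2|)
  set D := |Q p.1 p.2 - Q1 p.1 p.2| with hDdef
  have hD0 : 0 ≤ D := abs_nonneg _
  have hW : ∀ s', 0 ≤ W s' ∧ W s' ≤ 1 / (1 - γ) :=
    fun s' => wsum_mem (hπ.nonneg s') (hπ.sum_one s') (fun a' => hQb s' a')
  have hWdiff : ∀ s', |W s' - W1 s'| ≤ D := by
    intro s'
    rw [hWdef, hW1def]
    simp only
    rw [← Finset.sum_sub_distrib]
    simp only [← mul_sub]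
    exact wsum_abs_le (hπ.nonneg s') (hπ.sum_one s') (fun a' => hp (s', a'))
  -- the key recursive bound
  have hkey : D ≤ βR + γ * (βP * (1 / (1 - γ)) + D) := by
    obtain ⟨s, a⟩ := p
    have hbell : Q s a - Q1 s a = (R s a - R1 s (g a))
        + γ * ((∑ s', P s a s' * W s') - ∑ s', P1' s a s' * W1 s') := by
      rw [hB s a, hB1 s a]; ring
    have hsplit : (∑ s', P s a s' * W s') - (∑ s', P1' s a s' * W1 s')
        = (∑ s', (P s a s' - P1' s a s') * W s')
          + (∑ s', P1' s a s' * (W s' - W1 s')) := by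
      simp only [sub_mul, mul_sub, Finset.sum_sub_distrib]
      ring
    have hterm1 : |∑ s', (P s a s' - P1' s a s') * W s'| ≤ βP * (1 / (1 - γ)) := by
      have hPdiff : ∀ s', P s a s' - P1' s a s'
          = bP s a * (P2 s a s' - P1 s (g a) s') := by
        intro s'; rw [hdec.P_eq s a s']; simp only [hP1'def]; ring
      have heq : ∑ s', (P s a s' - P1' s a s') * W s'
          = bP s a * ((∑ s', P2 s a s' * W s') - ∑ s', P1 s (g a) s' * W s') := by
        simp only [hPdiff, sub_mul, mul_sub, mul_assoc, Finset.mul_sum,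
          Finset.sum_sub_distrib]
      rw [heq, abs_mul, abs_of_nonneg (hdec.bP_nonneg s a)]
      have h2 := wsum_mem (hdec.P2_nonneg s a) (hdec.P2_sum s a) hW
      have h3 := wsum_mem (fun s' => hdec.P1_nonneg s (g a) s') (hdec.P1_sum s (g a)) hW
      have h4 : |(∑ s', P2 s a s' * W s') - ∑ s', P1 s (g a) s' * W s'| ≤ 1 / (1 - γ) := by
        rw [abs_le]; constructor <;> [linarith [h2.1, h3.2]; linarith [h2.2, h3.1]]
      exact mul_le_mul (hdec.bP_le s a) h4 (abs_nonneg _) hβP0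
    have hterm2 : |∑ s', P1' s a s' * (W s' - W1 s')| ≤ D :=
      wsum_abs_le (hP1.nonneg s a) (hP1.sum_one s a) hWdiff
    have hRdiff : |R s a - R1 s (g a)| ≤ βR := by
      have heq : R s a - R1 s (g a) = bR s a * (R2 s a - R1 s (g a)) := by
        rw [hdec.R_eq s a]; ring
      rw [heq, abs_mul, abs_of_nonneg (hdec.bR_nonneg s a)]
      have h4 : |R2 s a - R1 s (g a)| ≤ 1 := by
        rw [abs_le]
        constructor <;>
          [linarith [(hdec.R2_nonneg s a), (hdec.R1_le_one s (g a))];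
           linarith [(hdec.R2_le_one s a), (hdec.R1_nonneg s (g a))]]
      calc bR s a * |R2 s a - R1 s (g a)| ≤ βR * 1 :=
            mul_le_mul (hdec.bR_le s a) h4 (abs_nonneg _) hβR0
        _ = βR := mul_one _
    calc D = |Q s a - Q1 s a| := rfl
      _ ≤ |R s a - R1 s (g a)|
          + γ * |(∑ s', P s a s' * W s') - ∑ s', P1' s a s' * W1 s'| := by
          rw [hbell]
          refine (abs_add_le _ _).trans ?_
          rw [abs_mul, abs_of_nonneg hγ0]
      _ ≤ βR + γ * (βP * (1 / (1 - γ)) + D) := by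
          refine add_le_add hRdiff (mul_le_mul_of_nonneg_left ?_ hγ0)
          rw [hsplit]
          exact (abs_add_le _ _).trans (add_le_add hterm1 hterm2)
  have hDle : D ≤ βR / (1 - γ) + γ * βP / (1 - γ) ^ 2 := by
    have h5 : D ≤ (βR + γ * βP / (1 - γ)) / (1 - γ) := by
      rw [le_div_iff₀ h1γ]
      have : γ * βP / (1 - γ) = γ * (βP * (1 / (1 - γ))) := by ring
      nlinarith [hkey]
    calc D ≤ (βR + γ * βP / (1 - γ)) / (1 - γ) := h5
      _ = βR / (1 - γ) + γ * βP / (1 - γ) ^ 2 := by field_simp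
  intro s
  refine le_trans ?_ hDle
  rw [Vpi, Vpi, ← hQdef, ← hQ1def, ← Finset.sum_sub_distrib]
  simp only [← mul_sub]
  exact wsum_abs_le (hπ.nonneg s) (hπ.sum_one s) (fun a => hp (s, a))


theorem statement_11 {S A G : Type*} [Fintype S] [Fintype A] [Fintype G]
    [Nonempty S] [Nonempty A]
    (P : S → A → S → ℝ) (R : S → A → ℝ) (γ : ℝ)
    (hP : IsKernel P) (hR : ∀ s a, 0 ≤ R s a ∧ R s a ≤ 1)
    (hγ0 : 0 ≤ γ) (hγ1 : γ < 1)
    (g : A → G) (hg : Function.Surjective g)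
    (βP βR : ℝ) (hβP : 0 ≤ βP ∧ βP ≤ 1) (hβR : 0 ≤ βR ∧ βR ≤ 1)
    (bP bR : S → A → ℝ) (P1 : S → G → S → ℝ) (P2 : S → A → S → ℝ)
    (R1 : S → G → ℝ) (R2 : S → A → ℝ)
    (hdec : IsDecomp P R g βP βR bP bR P1 P2 R1 R2)
    (πM1star : S → A → ℝ) (hπM1star : IsPolicy πM1star)
    (hopt : ∀ π : S → A → ℝ, IsPolicy π → ∀ s,
      Vpi (fun s a s' => P1 s (g a) s') (fun s a => R1 s (g a)) γ π s
        ≤ Vpi (fun s a s' => P1 s (g a) s') (fun s a => R1 s (g a)) γ πM1star s) :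
    supNorm (fun s => Vstar P R γ s - Vpi P R γ πM1star s)
      ≤ 2 * (βR / (1 - γ) + γ * βP / (1 - γ) ^ 2) := by
  have h1γ : (0:ℝ) < 1 - γ := by linarith
  set ε := βR / (1 - γ) + γ * βP / (1 - γ) ^ 2 with hεdef
  have hε0 : 0 ≤ ε := by
    have := hβP.1; have := hβR.1
    positivity
  set P1' : S → A → S → ℝ := fun s a s' => P1 s (g a) s' with hP1'def
  set R1' : S → A → ℝ := fun s a => R1 s (g a) with hR1'def
  have hsim : ∀ π : S → A → ℝ, IsPolicy π → ∀ s,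
      |Vpi P R γ π s - Vpi P1' R1' γ π s| ≤ ε :=
    fun π hπ => sim_bound P R γ hP hR hγ0 hγ1 g βP βR hβP.1 hβR.1
      bP bR P1 P2 R1 R2 hdec π hπ
  -- uniform policy for nonemptiness
  have hu : IsPolicy (fun (_ : S) (_ : A) => (Fintype.card A : ℝ)⁻¹) := by
    constructor
    · intro s a; positivity
    · intro s
      rw [Finset.sum_const, nsmul_eq_mul]
      simp only [Finset.card_univ]
      rw [mul_inv_cancel₀]
      exact_mod_cast Fintype.card_ne_zero
  haveI : Nonempty {π : S → A → ℝ // IsPolicy π} := ⟨⟨_, hu⟩⟩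
  have hBdd : ∀ s, BddAbove (Set.range fun π : {π : S → A → ℝ // IsPolicy π} =>
      Vpi P R γ π.1 s) := by
    intro s
    refine ⟨1 / (1 - γ), ?_⟩
    rintro x ⟨π, rfl⟩
    exact (Vpi_bounds hP hR hγ0 hγ1 π.2 s).2
  have hkey : ∀ s, Vstar P R γ s - Vpi P R γ πM1star s ≤ 2 * ε := by
    intro s
    rw [sub_le_iff_le_add, Vstar]
    refine ciSup_le fun π => ?_
    have h1 : Vpi P R γ π.1 s ≤ Vpi P1' R1' γ π.1 s + ε := by
      have := (abs_le.1 (hsim π.1 π.2 s)).2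
      linarith
    have h2 : Vpi P1' R1' γ π.1 s ≤ Vpi P1' R1' γ πM1star s := hopt π.1 π.2 s
    have h3 : Vpi P1' R1' γ πM1star s ≤ Vpi P R γ πM1star s + ε := by
      have := (abs_le.1 (hsim πM1star hπM1star s)).1
      linarith
    linarith
  have hnn : ∀ s, 0 ≤ Vstar P R γ s - Vpi P R γ πM1star s := by
    intro s
    rw [sub_nonneg, Vstar]
    exact le_ciSup (hBdd s) ⟨πM1star, hπM1star⟩
  rw [supNorm]
  refine ciSup_le fun s => ?_
  rw [abs_of_nonneg (hnn s)]
  exact hkey s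


end MDPGroup
end

section
/- Let S and A be finite nonempty sets, P(·|s,a) a probability distribution on S for each (s,a) ∈ S×A, and g : A → G a surjection onto a finite set G with A_h = g^{-1}(h). Consider all tuples (b_P, P₁, P₂) where b_P : S×A → [0,1], P₁(·|s,h) is a probability distribution on S for each (s,h) ∈ S×G, P₂(·|s,a) is a probability distribution on S for each (s,a) ∈ S×A, and P(s'|s,a) = (1−b_P(s,a))·P₁(s'|s,g(a)) + b_P(s,a)·P₂(s'|s,a) for all s, s', a. The minimum of max_{(s,a)∈S×A} b_P(s,a) over all such tuples exists and equals max_{s∈S, h∈G} (1 − Σ_{s'∈S} min_{a∈A_h} P(s'|s,a)). -/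
open scoped BigOperators Classical

namespace MDPGroup

variable {S A G : Type*}

theorem statement_12 {S A G : Type*} [Fintype S] [Fintype A] [Fintype G]
    [Nonempty S] [Nonempty A]
    (P : S → A → S → ℝ) (hP : IsKernel P)
    (g : A → G) (hg : Function.Surjective g) :
    IsLeast {m : ℝ | ∃ (bP : S → A → ℝ) (P1 : S → G → S → ℝ) (P2 : S → A → S → ℝ),
        (∀ s a, 0 ≤ bP s a ∧ bP s a ≤ 1) ∧
        (∀ s h, (∀ s', 0 ≤ P1 s h s') ∧ ∑ s', P1 s h s' = 1) ∧
        (∀ s a, (∀ s', 0 ≤ P2 s a s') ∧ ∑ s', P2 s a s' = 1) ∧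
        (∀ s a s', P s a s' = (1 - bP s a) * P1 s (g a) s' + bP s a * P2 s a s') ∧
        m = ⨆ p : S × A, bP p.1 p.2}
      (betaPstar P g) := by
  classical
  have hGne : Nonempty G := ⟨g (Classical.arbitrary A)⟩
  have hne : ∀ h : G, Nonempty {a : A // g a = h} := by
    intro h; obtain ⟨a, ha⟩ := hg h; exact ⟨⟨a, ha⟩⟩
  set m : S → G → S → ℝ := fun s h s' => ⨅ a : {a : A // g a = h}, P s a.1 s' with hm
  have hm_nonneg : ∀ s h s', 0 ≤ m s h s' := by
    intro s h s'
    haveI := hne h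
    exact le_ciInf fun a => hP.nonneg s a.1 s'
  have hm_le : ∀ s (a : A) s', m s (g a) s' ≤ P s a s' := by
    intro s a s'
    haveI := hne (g a)
    exact ciInf_le (Set.Finite.bddBelow
      (Set.finite_range fun x : {a' : A // g a' = g a} => P s x.1 s'))
      (⟨a, rfl⟩ : {a' : A // g a' = g a})
  set β : S → G → ℝ := fun s h => 1 - ∑ s', m s h s' with hβ
  have hbeta : betaPstar P g = ⨆ p : S × G, β p.1 p.2 := rfl
  have hsum : ∀ s h, ∑ s', m s h s' = 1 - β s h := by
    intro s h; simp [hβ]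
  have hβ_le : ∀ s h, β s h ≤ 1 := by
    intro s h
    have : 0 ≤ ∑ s', m s h s' := Finset.sum_nonneg fun s' _ => hm_nonneg s h s'
    simp only [hβ]; linarith
  have hβ_nonneg : ∀ s h, 0 ≤ β s h := by
    intro s h
    obtain ⟨a, ha⟩ := hg h
    have hle : ∑ s', m s h s' ≤ ∑ s', P s a s' :=
      Finset.sum_le_sum fun s' _ => ha ▸ hm_le s a s'
    rw [hP.sum_one s a] at hle
    simp only [hβ]; linarith
  constructor
  · -- membership
    refine ⟨fun s a => β s (g a),
      fun s h s' => if β s h = 1 then (Fintype.card S : ℝ)⁻¹ else m s h s' / (1 - β s h),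
      fun s a s' => if β s (g a) = 0 then P s a s' else (P s a s' - m s (g a) s') / β s (g a),
      fun s a => ⟨hβ_nonneg s (g a), hβ_le s (g a)⟩, ?_, ?_, ?_, ?_⟩
    · intro s h
      by_cases h1 : β s h = 1
      · simp only [if_pos h1]
        have hcard : (0 : ℝ) < (Fintype.card S : ℝ) := by
          exact_mod_cast Fintype.card_pos
        constructor
        · intro s'; positivity
        · rw [Finset.sum_const, Finset.card_univ, nsmul_eq_mul,
            mul_inv_cancel₀ hcard.ne']
      · have hpos : 0 < 1 - β s h := by
          rcases lt_or_eq_of_le (hβ_le s h) with h' | h'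
          · linarith
          · exact absurd h' h1
        simp only [if_neg h1]
        constructor
        · intro s'; exact div_nonneg (hm_nonneg s h s') hpos.le
        · rw [← Finset.sum_div, hsum s h, div_self hpos.ne']
    · intro s a
      by_cases h0 : β s (g a) = 0
      · simp only [if_pos h0]
        exact ⟨fun s' => hP.nonneg s a s', hP.sum_one s a⟩
      · have hpos : 0 < β s (g a) := lt_of_le_of_ne (hβ_nonneg s (g a)) (Ne.symm h0)
        simp only [if_neg h0]
        constructor
        · intro s'
          exact div_nonneg (by linarith [hm_le s a s']) hpos.le
        · rw [← Finset.sum_div, Finset.sum_sub_distrib, hP.sum_one s a, hsum s (g a),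
            div_eq_one_iff_eq hpos.ne']
          ring
    · intro s a s'
      by_cases h0 : β s (g a) = 0
      · have hzero : ∀ t ∈ (Finset.univ : Finset S), P s a t - m s (g a) t = 0 := by
          have hsz : ∑ t, (P s a t - m s (g a) t) = 0 := by
            rw [Finset.sum_sub_distrib, hP.sum_one s a, hsum s (g a), h0]; ring
          exact (Finset.sum_eq_zero_iff_of_nonneg
            (fun t _ => by linarith [hm_le s a t])).mp hsz
        have hps : m s (g a) s' = P s a s' := by
          have := hzero s' (Finset.mem_univ s'); linarith
        simp only [if_pos h0, h0, hps]
        norm_num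
      · by_cases h1 : β s (g a) = 1
        · have hmz : m s (g a) s' = 0 := by
            have hsz : ∑ t, m s (g a) t = 0 := by rw [hsum s (g a), h1]; ring
            have := (Finset.sum_eq_zero_iff_of_nonneg
              (fun t _ => hm_nonneg s (g a) t)).mp hsz s' (Finset.mem_univ s')
            exact this
          simp only [if_neg h0, h1, hmz]
          norm_num
        · have hpos : 0 < β s (g a) := lt_of_le_of_ne (hβ_nonneg s (g a)) (Ne.symm h0)
          have hpos1 : (0:ℝ) < 1 - β s (g a) := by
            rcases lt_or_eq_of_le (hβ_le s (g a)) with h' | h'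
            · linarith
            · exact absurd h' h1
          simp only [if_neg h0, if_neg h1]
          field_simp
          ring
    · -- sup equality
      rw [hbeta]
      refine le_antisymm (ciSup_le fun p => ?_) (ciSup_le fun p => ?_)
      · obtain ⟨a, ha⟩ := hg p.2
        have := le_ciSup (Set.Finite.bddAbove
          (Set.finite_range fun q : S × A => β q.1 (g q.2))) (p.1, a)
        simpa [ha] using this
      · exact le_ciSup (Set.Finite.bddAbove
          (Set.finite_range fun q : S × G => β q.1 q.2)) (p.1, g p.2)
  · -- lower bound
    rintro x ⟨bP, P1, P2, hb, h1, h2, heqn, rfl⟩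
    have hBdd : BddAbove (Set.range fun p : S × A => bP p.1 p.2) :=
      Set.Finite.bddAbove (Set.finite_range _)
    have hBle : ∀ s a, bP s a ≤ ⨆ p : S × A, bP p.1 p.2 :=
      fun s a => le_ciSup hBdd (s, a)
    rw [hbeta]
    refine ciSup_le fun p => ?_
    obtain ⟨s, h⟩ := p
    set B := ⨆ p : S × A, bP p.1 p.2 with hB
    have key : ∀ s', (1 - B) * P1 s h s' ≤ m s h s' := by
      intro s'
      haveI := hne h
      refine le_ciInf fun a => ?_
      have heq := heqn s a.1 s'
      rw [a.2] at heq
      have h2' : 0 ≤ bP s a.1 * P2 s a.1 s' :=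
        mul_nonneg (hb s a.1).1 ((h2 s a.1).1 s')
      have hstep : (1 - B) * P1 s h s' ≤ (1 - bP s a.1) * P1 s h s' :=
        mul_le_mul_of_nonneg_right (by linarith [hBle s a.1]) ((h1 s h).1 s')
      linarith
    have hsumkey : (1 - B) * 1 ≤ ∑ s', m s h s' := by
      calc (1 - B) * 1 = ∑ s', (1 - B) * P1 s h s' := by
            rw [← Finset.mul_sum, (h1 s h).2]
        _ ≤ ∑ s', m s h s' := Finset.sum_le_sum fun s' _ => key s'
    show β s h ≤ B
    simp only [hβ]
    linarith


end MDPGroup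
end

section
/- Let S and A be finite nonempty sets, R : S×A → [0,1], and g : A → G a surjection onto a finite set G with A_h = g^{-1}(h). Consider all tuples (b_R, R₁, R₂) where b_R : S×A → [0,1], R₁ : S×G → [0,1], R₂ : S×A → [0,1], and R(s,a) = (1−b_R(s,a))·R₁(s,g(a)) + b_R(s,a)·R₂(s,a) for all (s,a). The minimum of max_{(s,a)∈S×A} b_R(s,a) over all such tuples exists and equals max_{s∈S, h∈G} (max_{a∈A_h} R(s,a) − min_{a∈A_h} R(s,a)). -/
/-!
Within a group `A_h` the decomposition forces `R(s, a) ≤ R₁ + b (1 - R₁)` and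
`R(s, a') ≥ (1 - b) R₁` for `b = max b_R`, so the spread of `R(s, ·)` on `A_h` is at most `b`.
Conversely, with `m` and `M` the minimum and maximum of `R(s, ·)` on `A_h`, the choice
`b_R = M - m`, `R₁ = m / (1 - (M - m))`, `R₂ = (R - m) / (M - m)` attains the bound.
-/

open scoped BigOperators Classical

namespace MDPGroup

variable {S A G : Type*}

lemma iSup_sub_iInf_le_of_forall_sub_le {ι : Type*} [Finite ι] {f : ι → ℝ} {b : ℝ}
    (hb : 0 ≤ b) (hf : ∀ i j, f i - f j ≤ b) : (⨆ i, f i) - ⨅ i, f i ≤ b := by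
  cases isEmpty_or_nonempty ι
  · simp [hb]
  · rw [sub_le_iff_le_add]
    refine ciSup_le fun i => ?_
    rw [← sub_le_iff_le_add']
    exact le_ciInf fun j => by linarith [hf i j]

lemma mix_sub_mix_le {c y y' β β' b : ℝ} (hc : 0 ≤ c ∧ c ≤ 1) (hy : y ≤ 1) (hy' : 0 ≤ y')
    (hβ : 0 ≤ β ∧ β ≤ b) (hβ' : 0 ≤ β' ∧ β' ≤ b) :
    ((1 - β) * c + β * y) - ((1 - β') * c + β' * y') ≤ b := by
  have hupper : (1 - β) * c + β * y ≤ c + b * (1 - c) := by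
    linarith [mul_le_mul_of_nonneg_left hy hβ.1,
      mul_le_mul_of_nonneg_right hβ.2 (sub_nonneg.2 hc.2)]
  have hlower : (1 - b) * c ≤ (1 - β') * c + β' * y' := by
    linarith [mul_nonneg hβ'.1 hy', mul_le_mul_of_nonneg_right hβ'.2 hc.1]
  linarith

-- Both divisions are by zero only when their numerators vanish as well.
lemma eq_mix_of_mem_Icc {m M x : ℝ} (hm : 0 ≤ m) (hmx : m ≤ x) (hxM : x ≤ M) (hM : M ≤ 1) :
    x = (1 - (M - m)) * (m / (1 - (M - m))) + (M - m) * ((x - m) / (M - m)) := by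
  rw [mul_div_cancel_of_imp' fun h => by linarith, mul_div_cancel_of_imp' fun h => by linarith]
  ring

section GroupSpread

variable (R : S → A → ℝ) (g : A → G)

noncomputable def groupMax (s : S) (h : G) : ℝ := ⨆ a : {a : A // g a = h}, R s a

noncomputable def groupMin (s : S) (h : G) : ℝ := ⨅ a : {a : A // g a = h}, R s a

noncomputable def groupSpread (s : S) (h : G) : ℝ := groupMax R g s h - groupMin R g s h

lemma groupMin_nonneg (hR : ∀ s a, 0 ≤ R s a) (s : S) (h : G) : 0 ≤ groupMin R g s h :=
  Real.iInf_nonneg fun a => hR s a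

lemma groupMax_le_one (hR : ∀ s a, R s a ≤ 1) (s : S) (h : G) : groupMax R g s h ≤ 1 :=
  Real.iSup_le (fun a => hR s a) zero_le_one

variable [Finite A]

lemma le_groupMax (s : S) (a : A) : R s a ≤ groupMax R g s (g a) :=
  le_ciSup (Finite.bddAbove_range fun a' : {a' // g a' = g a} => R s a') ⟨a, rfl⟩

lemma groupMin_le (s : S) (a : A) : groupMin R g s (g a) ≤ R s a :=
  ciInf_le (Finite.bddBelow_range fun a' : {a' // g a' = g a} => R s a') ⟨a, rfl⟩

lemma groupSpread_nonneg (s : S) (h : G) : 0 ≤ groupSpread R g s h :=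
  sub_nonneg.2 <| Real.sInf_le_sSup _ (Set.finite_range _).bddBelow (Set.finite_range _).bddAbove

lemma groupSpread_le {s : S} {h : G} {b : ℝ} (hb : 0 ≤ b)
    (hR : ∀ a a', g a = h → g a' = h → R s a - R s a' ≤ b) : groupSpread R g s h ≤ b :=
  iSup_sub_iInf_le_of_forall_sub_le hb fun a a' => hR a a' a.2 a'.2

variable [Finite S]

lemma groupSpread_le_iSup {bR : S → A → ℝ} {R1 : S → G → ℝ} {R2 : S → A → ℝ}
    (hbR : ∀ s a, 0 ≤ bR s a) (hR1 : ∀ s h, 0 ≤ R1 s h ∧ R1 s h ≤ 1)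
    (hR2 : ∀ s a, 0 ≤ R2 s a ∧ R2 s a ≤ 1)
    (hdecomp : ∀ s a, R s a = (1 - bR s a) * R1 s (g a) + bR s a * R2 s a) (s : S) (h : G) :
    groupSpread R g s h ≤ ⨆ p : S × A, bR p.1 p.2 := by
  have hle_iSup (a : A) : bR s a ≤ ⨆ p : S × A, bR p.1 p.2 :=
    le_ciSup (Finite.bddAbove_range fun p : S × A => bR p.1 p.2) (s, a)
  refine groupSpread_le R g (Real.iSup_nonneg fun p => hbR p.1 p.2) fun a a' ha ha' => ?_
  rw [hdecomp s a, hdecomp s a', ha, ha']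
  exact mix_sub_mix_le (hR1 s h) (hR2 s a).2 (hR2 s a').1 ⟨hbR s a, hle_iSup a⟩
    ⟨hbR s a', hle_iSup a'⟩

lemma iSup_groupSpread_comp [Finite G] :
    ⨆ p : S × A, groupSpread R g p.1 (g p.2) = ⨆ p : S × G, groupSpread R g p.1 p.2 := by
  have hnonneg := Real.iSup_nonneg fun p : S × A => groupSpread_nonneg R g p.1 (g p.2)
  apply le_antisymm
  · refine Real.iSup_le (fun p => ?_) (Real.iSup_nonneg fun p => groupSpread_nonneg R g p.1 p.2)
    exact le_ciSup (Finite.bddAbove_range fun q : S × G => groupSpread R g q.1 q.2) (p.1, g p.2)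
  · refine Real.iSup_le (fun p => groupSpread_le R g hnonneg fun a a' ha ha' => ?_) hnonneg
    calc R p.1 a - R p.1 a' ≤ groupMax R g p.1 (g a) - groupMin R g p.1 (g a') := by
          linarith [le_groupMax R g p.1 a, groupMin_le R g p.1 a']
      _ = groupSpread R g p.1 (g a) := by rw [ha'.trans ha.symm, groupSpread]
      _ ≤ ⨆ q : S × A, groupSpread R g q.1 (g q.2) :=
          le_ciSup (Finite.bddAbove_range fun q : S × A => groupSpread R g q.1 (g q.2)) (p.1, a)

lemma exists_decomposition_iSup_eq [Finite G] (hR : ∀ s a, 0 ≤ R s a ∧ R s a ≤ 1) :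
    ∃ (bR : S → A → ℝ) (R1 : S → G → ℝ) (R2 : S → A → ℝ),
      (∀ s a, 0 ≤ bR s a ∧ bR s a ≤ 1) ∧
      (∀ s h, 0 ≤ R1 s h ∧ R1 s h ≤ 1) ∧
      (∀ s a, 0 ≤ R2 s a ∧ R2 s a ≤ 1) ∧
      (∀ s a, R s a = (1 - bR s a) * R1 s (g a) + bR s a * R2 s a) ∧
      ⨆ p : S × G, groupSpread R g p.1 p.2 = ⨆ p : S × A, bR p.1 p.2 := by
  have hmin := groupMin_nonneg R g fun s a => (hR s a).1
  have hmax := groupMax_le_one R g fun s a => (hR s a).2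
  have hspread := groupSpread_nonneg R g
  simp only [groupSpread] at hspread ⊢
  refine ⟨fun s a => groupMax R g s (g a) - groupMin R g s (g a),
    fun s h => groupMin R g s h / (1 - (groupMax R g s h - groupMin R g s h)),
    fun s a => (R s a - groupMin R g s (g a)) / (groupMax R g s (g a) - groupMin R g s (g a)),
    fun s a => ⟨hspread s (g a), by linarith [hmin s (g a), hmax s (g a)]⟩,
    fun s h => unitInterval.div_mem (hmin s h) (by linarith [hmin s h, hmax s h])
      (by linarith [hmax s h]),
    fun s a => unitInterval.div_mem (by linarith [groupMin_le R g s a]) (hspread s (g a))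
      (by linarith [le_groupMax R g s a]),
    fun s a => eq_mix_of_mem_Icc (hmin s (g a)) (groupMin_le R g s a) (le_groupMax R g s a)
      (hmax s (g a)),
    (iSup_groupSpread_comp R g).symm⟩

end GroupSpread

theorem statement_13_general {S A G : Type*} [Fintype S] [Fintype A] [Fintype G]
    (R : S → A → ℝ) (hR : ∀ s a, 0 ≤ R s a ∧ R s a ≤ 1)
    (g : A → G) :
    IsLeast {m : ℝ | ∃ (bR : S → A → ℝ) (R1 : S → G → ℝ) (R2 : S → A → ℝ),
        (∀ s a, 0 ≤ bR s a ∧ bR s a ≤ 1) ∧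
        (∀ s h, 0 ≤ R1 s h ∧ R1 s h ≤ 1) ∧
        (∀ s a, 0 ≤ R2 s a ∧ R2 s a ≤ 1) ∧
        (∀ s a, R s a = (1 - bR s a) * R1 s (g a) + bR s a * R2 s a) ∧
        m = ⨆ p : S × A, bR p.1 p.2}
      (⨆ p : S × G, ((⨆ a : {a : A // g a = p.2}, R p.1 a.1)
          - ⨅ a : {a : A // g a = p.2}, R p.1 a.1)) := by
  refine ⟨exists_decomposition_iSup_eq R g hR, ?_⟩
  rintro _ ⟨bR, R1, R2, hbR, hR1, hR2, hdecomp, rfl⟩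
  exact Real.iSup_le
    (fun p => groupSpread_le_iSup R g (fun s a => (hbR s a).1) hR1 hR2 hdecomp p.1 p.2)
    (Real.iSup_nonneg fun p => (hbR p.1 p.2).1)

theorem statement_13 {S A G : Type*} [Fintype S] [Fintype A] [Fintype G]
    [Nonempty S] [Nonempty A]
    (R : S → A → ℝ) (hR : ∀ s a, 0 ≤ R s a ∧ R s a ≤ 1)
    (g : A → G) (hg : Function.Surjective g) :
    IsLeast {m : ℝ | ∃ (bR : S → A → ℝ) (R1 : S → G → ℝ) (R2 : S → A → ℝ),
        (∀ s a, 0 ≤ bR s a ∧ bR s a ≤ 1) ∧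
        (∀ s h, 0 ≤ R1 s h ∧ R1 s h ≤ 1) ∧
        (∀ s a, 0 ≤ R2 s a ∧ R2 s a ≤ 1) ∧
        (∀ s a, R s a = (1 - bR s a) * R1 s (g a) + bR s a * R2 s a) ∧
        m = ⨆ p : S × A, bR p.1 p.2}
      (⨆ p : S × G, ((⨆ a : {a : A // g a = p.2}, R p.1 a.1)
          - ⨅ a : {a : A // g a = p.2}, R p.1 a.1)) :=
  statement_13_general R hR g

end MDPGroup
end

section
/- Let S and A be finite nonempty sets, P a transition kernel on S×A, and g : A → G a surjection with A_h = g^{-1}(h). Let P̂ be another transition kernel (P̂(·|s,a) a probability distribution on S for each (s,a)), and for each h ∈ G let Ā_h ⊆ A_h be nonempty; write Ā = ∪_{h∈G} Ā_h and β̂_P = max_{s∈S, h∈G} (1 − Σ_{s'∈S} min_{a∈Ā_h} P̂(s'|s,a)). Suppose |P(s'|s,a₁) − P(s'|s,a₂)| ≤ η_P for all s, s' and all a₁, a₂ with g(a₁) = g(a₂). Then |β_P^*(g) − β̂_P| ≤ S·max(η_P, ε) (writing S for |S|), where ε = max_{s,s'∈S, a∈Ā} |P(s'|s,a) − P̂(s'|s,a)|.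 -/
open scoped BigOperators Classical

namespace MDPGroup

variable {S A G : Type*}

private lemma abs_ciSup_sub_ciSup {ι : Type*} [Nonempty ι] [Finite ι]
    (f g : ι → ℝ) (c : ℝ) (h : ∀ i, |f i - g i| ≤ c) :
    |(⨆ i, f i) - ⨆ i, g i| ≤ c := by
  have hbf : BddAbove (Set.range f) := Set.Finite.bddAbove (Set.finite_range f)
  have hbg : BddAbove (Set.range g) := Set.Finite.bddAbove (Set.finite_range g)
  rw [abs_le]
  constructor
  · have : (⨆ i, g i) ≤ (⨆ i, f i) + c := by
      apply ciSup_le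
      intro i
      have := (abs_le.mp (h i)).1
      have hle : g i ≤ f i + c := by linarith
      exact hle.trans (add_le_add_left (le_ciSup hbf i) c)
    linarith
  · have : (⨆ i, f i) ≤ (⨆ i, g i) + c := by
      apply ciSup_le
      intro i
      have := (abs_le.mp (h i)).2
      have hle : f i ≤ g i + c := by linarith
      exact hle.trans (add_le_add_left (le_ciSup hbg i) c)
    linarith

theorem statement_18 {S A G : Type*} [Fintype S] [Fintype A] [Fintype G]
    [Nonempty S] [Nonempty A]
    (P Phat : S → A → S → ℝ) (hP : IsKernel P) (hPhat : IsKernel Phat)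
    (g : A → G) (hg : Function.Surjective g)
    (Abar : G → Finset A)
    (hAbar_sub : ∀ h a, a ∈ Abar h → g a = h)
    (hAbar_ne : ∀ h, (Abar h).Nonempty)
    (ηP : ℝ)
    (hηP : ∀ s s' a₁ a₂, g a₁ = g a₂ → |P s a₁ s' - P s a₂ s'| ≤ ηP)
    (ε : ℝ)
    (hε : ε = ⨆ q : {q : S × S × A // ∃ h, q.2.2 ∈ Abar h},
        |P q.1.1 q.1.2.2 q.1.2.1 - Phat q.1.1 q.1.2.2 q.1.2.1|) :
    |betaPstar P g
        - ⨆ p : S × G, (1 - ∑ s', (Abar p.2).inf' (hAbar_ne p.2) fun a => Phat p.1 a s')|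
      ≤ (Fintype.card S : ℝ) * max ηP ε := by
  classical
  have hGne : Nonempty G := ⟨g (Classical.arbitrary A)⟩
  have hε_bound : ∀ s s' a, (∃ h, a ∈ Abar h) → |P s a s' - Phat s a s'| ≤ ε := by
    intro s s' a ha
    rw [hε]
    exact le_ciSup (f := fun q : {q : S × S × A // ∃ h, q.2.2 ∈ Abar h} =>
      |P q.1.1 q.1.2.2 q.1.2.1 - Phat q.1.1 q.1.2.2 q.1.2.1|)
      (Set.Finite.bddAbove (Set.finite_range _)) ⟨(s, s', a), ha⟩
  -- pointwise bound over pairs (s, h)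
  have main : ∀ p : S × G,
      |(1 - ∑ s', ⨅ a : {a : A // g a = p.2}, P p.1 a.1 s')
        - (1 - ∑ s', (Abar p.2).inf' (hAbar_ne p.2) fun a => Phat p.1 a s')|
      ≤ (Fintype.card S : ℝ) * max ηP ε := by
    rintro ⟨s, h⟩
    obtain ⟨a1, ha1⟩ := hAbar_ne h
    have hga1 : g a1 = h := hAbar_sub h a1 ha1
    have hne : Nonempty {a : A // g a = h} := ⟨⟨a1, hga1⟩⟩
    set m : S → ℝ := fun s' => ⨅ a : {a : A // g a = h}, P s a.1 s' with hm
    set mh : S → ℝ := fun s' => (Abar h).inf' (hAbar_ne h) fun a => Phat s a s' with hmh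
    -- direction 1 : m s' ≤ mh s' + ε, pointwise
    have dir1 : ∀ s', m s' - mh s' ≤ ε := by
      intro s'
      obtain ⟨a2, ha2, ha2eq⟩ := (Abar h).exists_mem_eq_inf' (hAbar_ne h)
        (fun a => Phat s a s')
      have h1 : m s' ≤ P s a2 s' :=
        ciInf_le (Set.Finite.bddBelow (Set.finite_range _)) (⟨a2, hAbar_sub h a2 ha2⟩ : {a : A // g a = h})
      have h2 := (abs_le.mp (hε_bound s s' a2 ⟨h, ha2⟩)).2
      have hmh2 : mh s' = Phat s a2 s' := ha2eq
      linarith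
    -- direction 2 : Σ mh ≤ 1 and Σ m ≥ 1 - card S * ηP (both via the fixed a1)
    have hmh_le : ∀ s', mh s' ≤ Phat s a1 s' := fun s' =>
      Finset.inf'_le _ ha1
    have hm_ge : ∀ s', P s a1 s' - ηP ≤ m s' := by
      intro s'
      apply le_ciInf
      rintro ⟨a, hga⟩
      have := (abs_le.mp (hηP s s' a1 a (by rw [hga1, hga]))).2
      show P s a1 s' - ηP ≤ P s a s'
      linarith
    have hsum2 : (∑ s', mh s') - ∑ s', m s' ≤ (Fintype.card S : ℝ) * ηP := by
      have h1 : ∑ s', mh s' ≤ ∑ s', Phat s a1 s' := Finset.sum_le_sum fun s' _ => hmh_le s'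
      have h2 : ∑ s', (P s a1 s' - ηP) ≤ ∑ s', m s' := Finset.sum_le_sum fun s' _ => hm_ge s'
      rw [hPhat.sum_one] at h1
      rw [Finset.sum_sub_distrib, hP.sum_one, Finset.sum_const, Finset.card_univ,
        nsmul_eq_mul] at h2
      linarith
    have hsum1 : (∑ s', m s') - ∑ s', mh s' ≤ (Fintype.card S : ℝ) * ε := by
      have h1 : ∑ s', (m s' - mh s') ≤ ∑ s', ε := Finset.sum_le_sum fun s' _ => dir1 s'
      rw [Finset.sum_sub_distrib] at h1
      rw [Finset.sum_const, Finset.card_univ, nsmul_eq_mul] at h1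
      linarith
    have hcard : (0:ℝ) ≤ (Fintype.card S : ℝ) := Nat.cast_nonneg _
    have hη_le : (Fintype.card S : ℝ) * ηP ≤ (Fintype.card S : ℝ) * max ηP ε :=
      mul_le_mul_of_nonneg_left (le_max_left _ _) hcard
    have hε_le : (Fintype.card S : ℝ) * ε ≤ (Fintype.card S : ℝ) * max ηP ε :=
      mul_le_mul_of_nonneg_left (le_max_right _ _) hcard
    have goal_eq : ∀ x y : ℝ, (1 - x) - (1 - y) = y - x := fun x y => by ring
    rw [abs_le]
    refine ⟨?_, ?_⟩
    · have h1 := hsum1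
      simp only [hm, hmh] at h1 ⊢
      linarith
    · have h2 := hsum2
      simp only [hm, hmh] at h2 ⊢
      linarith
  unfold betaPstar
  exact abs_ciSup_sub_ciSup _ _ _ main


end MDPGroup
end
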